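/- arXiv:math/0601303 — 7 statements merged into one kernel-verified Lean document; each statement's English description precedes it below -/
import Mathlib

section
/- Let L : ℝ[X] → ℝ[X] be a linear map that is skew symmetric with respect to the inner product, i.e. ⟨L f, g⟩ = −⟨f, L g⟩ for all polynomials f, g, and that satisfies L(x^n) = γ_n x^{n+1} + (terms of degree ≤ n) with γ_n ≠ 0 for every n ≥ 0. Then for every n ≥ 0 the structure relation L p_n = γ_n A_n p_{n+1} − γ_{n−1} C_n p_{n−1} holds (for n = 0 the last term is 0 since p_{−1} := 0, so no value of γ_{−1} is needed). -/
open Polynomial MeasureTheory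
open Finset

section Helpers
variable {μ : Measure ℝ}

private lemma integ_mul (hint : ∀ f : ℝ[X], Integrable (fun x => f.eval x) μ)
    (f g : ℝ[X]) : Integrable (fun x => f.eval x * g.eval x) μ := by
  simpa using hint (f * g)

private lemma I_sum (hint : ∀ f : ℝ[X], Integrable (fun x => f.eval x) μ)
    {ι : Type*} (s : Finset ι) (f : ι → ℝ[X]) (g : ℝ[X]) :
    (∫ x, (∑ i ∈ s, f i).eval x * g.eval x ∂μ)
      = ∑ i ∈ s, ∫ x, (f i).eval x * g.eval x ∂μ := by
  simp only [eval_finset_sum, Finset.sum_mul]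
  exact integral_finset_sum s (fun i _ => integ_mul hint (f i) g)

private lemma I_smul (a : ℝ) (f g : ℝ[X]) :
    (∫ x, (a • f).eval x * g.eval x ∂μ) = a * ∫ x, f.eval x * g.eval x ∂μ := by
  simp only [eval_smul, smul_eq_mul, mul_assoc]
  exact integral_const_mul a _

private lemma I_comm (f g : ℝ[X]) :
    (∫ x, f.eval x * g.eval x ∂μ) = ∫ x, g.eval x * f.eval x ∂μ := by
  rw [show (fun x => f.eval x * g.eval x) = fun x => g.eval x * f.eval x from
    funext fun x => mul_comm _ _]

private lemma expand_aux (p : ℕ → ℝ[X]) (hdeg : ∀ n, (p n).degree = n)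
    (hl : ∀ n, (p n).leadingCoeff ≠ 0) :
    ∀ (N : ℕ) (q : ℝ[X]), q.degree ≤ (N : ℕ) →
      ∃ c : ℕ → ℝ, q = ∑ m ∈ range (N + 1), c m • p m := by
  have hnd : ∀ n, (p n).natDegree = n := fun n => natDegree_eq_of_degree_eq_some (hdeg n)
  have hcoeff : ∀ n, (p n).coeff n = (p n).leadingCoeff := by
    intro n; rw [leadingCoeff, hnd]
  intro N
  induction N with
  | zero =>
      intro q hq
      have hb : (p 0).coeff 0 ≠ 0 := by rw [hcoeff]; exact hl 0
      have hp0 : p 0 = C ((p 0).coeff 0) := eq_C_of_degree_le_zero (le_of_eq (hdeg 0))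
      have hq0 : q = C (q.coeff 0) := eq_C_of_degree_le_zero (by simpa using hq)
      refine ⟨fun _ => q.coeff 0 / (p 0).coeff 0, ?_⟩
      rw [Finset.sum_range_one]
      show q = (q.coeff 0 / (p 0).coeff 0) • p 0
      rw [hq0, hp0, smul_C, smul_eq_mul]
      simp only [coeff_C_zero]
      rw [div_mul_cancel₀ _ hb]
  | succ N ih =>
      intro q hq
      set a := q.coeff (N + 1) / (p (N + 1)).leadingCoeff with ha
      have hsub : (q - a • p (N + 1)).degree ≤ (N : ℕ) := by
        refine (degree_le_iff_coeff_zero _ _).2 ?_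
        intro m hm
        have hm' : N < m := by exact_mod_cast hm
        rcases eq_or_lt_of_le (Nat.succ_le_of_lt hm') with hEq | hlt
        · simp only [coeff_sub, coeff_smul, smul_eq_mul, ← hEq]
          rw [hcoeff, ha, div_mul_cancel₀ _ (hl (N + 1)), sub_self]
        · have h1 : q.coeff m = 0 :=
            coeff_eq_zero_of_degree_lt (lt_of_le_of_lt hq (by exact_mod_cast hlt))
          have h2 : (p (N + 1)).coeff m = 0 :=
            coeff_eq_zero_of_degree_lt (by rw [hdeg]; exact_mod_cast hlt)
          simp [h1, h2]
      obtain ⟨c, hc⟩ := ih _ hsub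
      refine ⟨Function.update c (N + 1) a, ?_⟩
      rw [Finset.sum_range_succ, Function.update_self]
      rw [Finset.sum_congr rfl (fun m hm => by
        rw [Function.update_of_ne (by have := Finset.mem_range.mp hm; omega) a c])]
      rw [← hc]; ring

private lemma L_deg (L : ℝ[X] →ₗ[ℝ] ℝ[X]) (γ : ℕ → ℝ)
    (hLdeg : ∀ n : ℕ, ∃ r : ℝ[X], r.degree ≤ (n : ℕ) ∧
      L (X ^ n) = C (γ n) * X ^ (n + 1) + r)
    (f : ℝ[X]) (d : ℕ) (hf : f.degree ≤ (d : ℕ)) :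
    (L f).degree ≤ ((d + 1 : ℕ) : WithBot ℕ) ∧ (L f).coeff (d + 1) = γ d * f.coeff d := by
  choose r hr hLX using hLdeg
  have hfd : f = ∑ i ∈ range (d + 1), f.coeff i • (X : ℝ[X]) ^ i := by
    conv_lhs => rw [Polynomial.as_sum_range' f (d + 1)
      (Nat.lt_succ_of_le (natDegree_le_iff_degree_le.2 hf))]
    exact Finset.sum_congr rfl fun i _ => (smul_X_eq_monomial).symm
  have hLf : L f = ∑ i ∈ range (d + 1), f.coeff i • (C (γ i) * X ^ (i + 1) + r i) := by
    conv_lhs => rw [hfd]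
    rw [map_sum]
    exact Finset.sum_congr rfl fun i _ => by rw [L.map_smul, hLX]
  constructor
  · rw [hLf]
    refine (degree_sum_le _ _).trans (Finset.sup_le fun i hi => ?_)
    have hi' : i ≤ d := Nat.lt_succ_iff.mp (Finset.mem_range.mp hi)
    refine (degree_smul_le _ _).trans ((degree_add_le _ _).trans (max_le ?_ ?_))
    · exact (degree_C_mul_X_pow_le _ _).trans (by exact_mod_cast Nat.succ_le_succ hi')
    · exact (hr i).trans (by exact_mod_cast Nat.le_succ_of_le hi')
  · rw [hLf, finset_sum_coeff]
    rw [Finset.sum_eq_single d]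
    · have hrz : (r d).coeff (d + 1) = 0 :=
        coeff_eq_zero_of_degree_lt (lt_of_le_of_lt (hr d) (by exact_mod_cast Nat.lt_succ_self d))
      rw [coeff_smul, coeff_add, coeff_C_mul, coeff_X_pow, hrz, if_pos rfl, smul_eq_mul]
      ring
    · intro i hi hne
      have hi' : i ≤ d := Nat.lt_succ_iff.mp (Finset.mem_range.mp hi)
      have hrz : (r i).coeff (d + 1) = 0 :=
        coeff_eq_zero_of_degree_lt (lt_of_le_of_lt (hr i) (by exact_mod_cast by omega))
      have hx : ((X : ℝ[X]) ^ (i + 1)).coeff (d + 1) = 0 := by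
        rw [coeff_X_pow]; exact if_neg (by omega)
      simp [coeff_smul, coeff_C_mul, hx, hrz]
    · intro hd; exact absurd (Finset.self_mem_range_succ d) hd

private lemma I_expand (hint : ∀ f : ℝ[X], Integrable (fun x => f.eval x) μ)
    (p : ℕ → ℝ[X]) (h : ℕ → ℝ)
    (horth : ∀ n m, (∫ x, (p n).eval x * (p m).eval x ∂μ) = if n = m then h n else 0)
    {N : ℕ} {q : ℝ[X]} {c : ℕ → ℝ}
    (hc : q = ∑ m ∈ range (N + 1), c m • p m) {j : ℕ} (hj : j ≤ N) :
    (∫ x, q.eval x * (p j).eval x ∂μ) = c j * h j := by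
  rw [hc, I_sum hint]
  rw [Finset.sum_congr rfl fun m _ => (I_smul (c m) (p m) (p j))]
  rw [Finset.sum_congr rfl fun m _ => by rw [horth m j]]
  rw [Finset.sum_eq_single j]
  · rw [if_pos rfl]
  · intro m _ hne; rw [if_neg hne, mul_zero]
  · intro hj'; exact absurd (Finset.mem_range.mpr (by omega)) hj'

private lemma coeff_expand (p : ℕ → ℝ[X]) (hdeg : ∀ n, (p n).degree = n)
    {N : ℕ} {q : ℝ[X]} {c : ℕ → ℝ}
    (hc : q = ∑ m ∈ range (N + 1), c m • p m) :
    q.coeff N = c N * (p N).coeff N := by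
  rw [hc, finset_sum_coeff, Finset.sum_eq_single N]
  · rw [coeff_smul, smul_eq_mul]
  · intro m hm hne
    have hz : (p m).coeff N = 0 := coeff_eq_zero_of_degree_lt (by
      rw [hdeg]
      exact_mod_cast lt_of_le_of_ne (Nat.lt_succ_iff.mp (Finset.mem_range.mp hm)) hne)
    simp [coeff_smul, hz]
  · intro hd; exact absurd (Finset.self_mem_range_succ N) hd

end Helpers

/-- **Structure relation** (Proposition 2.1, structure relation part).
If `L` is a linear operator on real polynomials, skew symmetric with respect to the
inner product `⟨f,g⟩ = ∫ f g dμ`, raising degrees by one with leading coefficients `γ n ≠ 0`,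
then `L pₙ = γₙ Aₙ pₙ₊₁ - γₙ₋₁ Cₙ pₙ₋₁` (with the last term vanishing for `n = 0`). -/
theorem structure_relation_skew_symmetric
    (μ : Measure ℝ)
    (hint : ∀ f : ℝ[X], Integrable (fun x => f.eval x) μ)
    (p : ℕ → ℝ[X]) (k h A B Cc : ℕ → ℝ)
    (hdeg : ∀ n, (p n).degree = n)
    (hlead : ∀ n, (p n).leadingCoeff = k n)
    (hk : ∀ n, k n ≠ 0)
    (hh : ∀ n, 0 < h n)
    (horth : ∀ n m, (∫ x, (p n).eval x * (p m).eval x ∂μ) = if n = m then h n else 0)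
    (hA : ∀ n, A n = k n / k (n + 1))
    (hC : ∀ n, 1 ≤ n → Cc n = A (n - 1) * h n / h (n - 1))
    (hrec : ∀ n, X * p n =
      C (A n) * p (n + 1) + C (B n) * p n +
        C (Cc n) * (if n = 0 then 0 else p (n - 1)))
    (L : ℝ[X] →ₗ[ℝ] ℝ[X]) (γ : ℕ → ℝ)
    (hskew : ∀ f g : ℝ[X],
      (∫ x, (L f).eval x * g.eval x ∂μ) = - ∫ x, f.eval x * (L g).eval x ∂μ)
    (hγ : ∀ n, γ n ≠ 0)
    (hLdeg : ∀ n : ℕ, ∃ r : ℝ[X], r.degree ≤ (n : ℕ) ∧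
      L (X ^ n) = C (γ n) * X ^ (n + 1) + r) :
    ∀ n : ℕ, L (p n) =
      C (γ n * A n) * p (n + 1) -
        C (γ (n - 1) * Cc n) * (if n = 0 then 0 else p (n - 1)) := by
  have hlne : ∀ m, (p m).leadingCoeff ≠ 0 := fun m => by rw [hlead]; exact hk m
  have hnd : ∀ m, (p m).natDegree = m := fun m => natDegree_eq_of_degree_eq_some (hdeg m)
  have hpc : ∀ m, (p m).coeff m = k m := fun m => by
    rw [← hlead, leadingCoeff, hnd]
  have hLp : ∀ m, (L (p m)).degree ≤ ((m + 1 : ℕ) : WithBot ℕ) ∧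
      (L (p m)).coeff (m + 1) = γ m * k m := fun m => by
    have := L_deg L γ hLdeg (p m) m (le_of_eq (hdeg m))
    rwa [hpc] at this
  intro n
  obtain ⟨c, hc⟩ := expand_aux p hdeg hlne (n + 1) (L (p n)) (hLp n).1
  -- top coefficient
  have hctop : c (n + 1) = γ n * A n := by
    have h1 := coeff_expand p hdeg hc
    rw [(hLp n).2, hpc] at h1
    rw [hA, ← mul_div_assoc, h1, mul_div_cancel_right₀ _ (hk (n + 1))]
  -- skew-symmetry consequence
  have hIc : ∀ j, j ≤ n + 1 → c j * h j = - ∫ x, (p n).eval x * (L (p j)).eval x ∂μ := by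
    intro j hj
    rw [← I_expand hint p h horth hc hj, hskew]
  -- c n = 0
  have hcn : c n = 0 := by
    have e1 : (∫ x, (L (p n)).eval x * (p n).eval x ∂μ) = c n * h n :=
      I_expand hint p h horth hc (by omega)
    have e2 := hskew (p n) (p n)
    rw [I_comm (p n) (L (p n)), e1] at e2
    have : c n * h n = 0 := by linarith
    exact (mul_eq_zero.mp this).resolve_right (ne_of_gt (hh n))
  -- c m = 0 for m + 1 < n
  have hcsmall : ∀ m, m + 1 < n → c m = 0 := by
    intro m hm
    obtain ⟨d, hd⟩ := expand_aux p hdeg hlne (m + 1) (L (p m)) (hLp m).1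
    have e2 : (∫ x, (L (p m)).eval x * (p n).eval x ∂μ) = 0 := by
      rw [hd, I_sum hint]
      refine Finset.sum_eq_zero fun j hj => ?_
      rw [I_smul, horth, if_neg (by have := Finset.mem_range.mp hj; omega), mul_zero]
    have e1 := hIc m (by omega)
    rw [I_comm (p n) (L (p m)), e2, neg_zero] at e1
    exact (mul_eq_zero.mp e1).resolve_right (ne_of_gt (hh m))
  -- case split on n
  cases n with
  | zero =>
      rw [if_pos rfl, mul_zero, sub_zero, hc]
      rw [Finset.sum_range_succ, Finset.sum_range_one, hcn, hctop, zero_smul, zero_add,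
        smul_eq_C_mul]
  | succ m =>
      -- c m = -(γ m * Cc (m+1))
      have hcm : c m = -(γ m * Cc (m + 1)) := by
        obtain ⟨d, hd⟩ := expand_aux p hdeg hlne (m + 1) (L (p m)) (hLp m).1
        have hdtop : d (m + 1) * k (m + 1) = γ m * k m := by
          have h1 := coeff_expand p hdeg hd
          rw [(hLp m).2, hpc] at h1
          rw [← h1]
        have e2 : (∫ x, (L (p m)).eval x * (p (m + 1)).eval x ∂μ) = d (m + 1) * h (m + 1) :=
          I_expand hint p h horth hd (le_refl _)
        have e1 := hIc m (by omega)
        rw [I_comm (p (m + 1)) (L (p m)), e2] at e1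
        have hcc : Cc (m + 1) = A m * h (m + 1) / h m := by
          have := hC (m + 1) (by omega)
          simpa using this
        have hd1 : d (m + 1) = γ m * k m / k (m + 1) := by
          rw [eq_div_iff (hk (m + 1))]; exact hdtop
        have hcmval : c m = -(d (m + 1) * h (m + 1)) / h m := by
          rw [eq_div_iff (hh m).ne']; linarith [e1]
        rw [hcmval, hd1, hcc, hA]; ring
      rw [if_neg (Nat.succ_ne_zero m), hc]
      have hsum0 : ∑ j ∈ range m, c j • p j = 0 :=
        Finset.sum_eq_zero fun j hj => by
          rw [hcsmall j (by have := Finset.mem_range.mp hj; omega), zero_smul]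
      rw [show m + 1 + 1 + 1 = (m + 1) + 1 + 1 from rfl]
      rw [Finset.sum_range_succ, Finset.sum_range_succ, Finset.sum_range_succ, hsum0,
        hcn, hcm, hctop]
      simp only [Nat.add_sub_cancel]
      simp only [zero_add, zero_smul, add_zero, neg_smul, smul_eq_C_mul]
      ring
end

section
/- Let L : ℝ[X] → ℝ[X] be a linear map that is skew symmetric with respect to the inner product, i.e. ⟨L f, g⟩ = −⟨f, L g⟩ for all polynomials f, g, and that satisfies L(x^n) = γ_n x^{n+1} + (terms of degree ≤ n) with γ_n ≠ 0 for every n ≥ 0. Then for every n ≥ 1 the lowering relation −γ_n (x − B_n) p_n(x) + (L p_n)(x) = −(γ_n + γ_{n−1}) C_n p_{n−1}(x) holds. -/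
/-!
The polynomial `L p_n - γ_n A_n p_{n+1} + γ_{n-1} C_n p_{n-1}` has degree at most `n + 1` and is
orthogonal to `p_0, …, p_{n+1}`, hence vanishes. Against `p_j` with `j ≤ n - 2` this is skew
symmetry and `deg L p_j ≤ j + 1 < n`; against `p_n` it is `⟨L f, f⟩ = 0`. Against `p_{n+1}` and
(by skew symmetry) `p_{n-1}` the pairings are fixed by leading coefficients alone, since pairing a
polynomial of degree `≤ j` with `p_j` only sees its coefficient of `x^j`, and the coefficient of
`x^{j+1}` in `L p_j` is `γ_j k_j`. The three-term recurrence turns this expansion of `L p_n` into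
the lowering relation.
-/

open Polynomial MeasureTheory

namespace Polynomial

variable {K : Type*} [Field K]

section RaisingOperator

variable {L : K[X] →ₗ[K] K[X]} {γ : ℕ → K}

theorem degree_map_sub_C_mul_X_pow_le
    (hL : ∀ n : ℕ, (L (X ^ n) - C (γ n) * X ^ (n + 1)).degree ≤ (n : WithBot ℕ)) {f : K[X]} {n : ℕ}
    (hf : f.degree ≤ n) : (L f - C (γ n * f.coeff n) * X ^ (n + 1)).degree ≤ (n : WithBot ℕ) := by
  classical
  let Φ : K[X] →ₗ[K] K[X] := L - (lcoeff K n).smulRight (C (γ n) * X ^ (n + 1))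
  have hΦ : degreeLE K n ≤ (degreeLE K n).comap Φ := by
    refine degreeLE_eq_span_X_pow.le.trans (Submodule.span_le.2 ?_)
    rw [Finset.coe_image, Set.image_subset_iff]
    intro i hi
    have hi : i ≤ n := Nat.lt_succ_iff.mp (Finset.mem_range.mp hi)
    simp only [Set.mem_preimage, SetLike.mem_coe, Submodule.mem_comap, mem_degreeLE]
    rcases hi.eq_or_lt with rfl | hlt
    · simpa [Φ] using hL i
    · have hXi : (L (X ^ i)).degree ≤ (i + 1 : ℕ) := by
        have := (degree_add_le _ _).trans (max_le ((hL i).trans (Nat.cast_le.2 i.le_succ))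
          (degree_C_mul_X_pow_le (i + 1) (γ i)))
        rwa [sub_add_cancel] at this
      simpa [Φ, coeff_X_pow, hlt.ne'] using hXi.trans (Nat.cast_le.2 hlt)
  have key := hΦ (mem_degreeLE.2 hf)
  rw [Submodule.mem_comap, mem_degreeLE] at key
  convert key using 2
  simp only [Φ, LinearMap.sub_apply, LinearMap.smulRight_apply, lcoeff_apply, smul_eq_C_mul, C_mul]
  ring

theorem degree_map_le_of_degree_le
    (hL : ∀ n : ℕ, (L (X ^ n) - C (γ n) * X ^ (n + 1)).degree ≤ (n : WithBot ℕ)) {f : K[X]} {n : ℕ}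
    (hf : f.degree ≤ n) : (L f).degree ≤ (n + 1 : ℕ) := by
  have := (degree_add_le _ _).trans <| max_le
    ((degree_map_sub_C_mul_X_pow_le hL hf).trans (Nat.cast_le.2 n.le_succ))
    (degree_C_mul_X_pow_le (n + 1) (γ n * f.coeff n))
  rwa [sub_add_cancel] at this

theorem coeff_map_succ_of_degree_le
    (hL : ∀ n : ℕ, (L (X ^ n) - C (γ n) * X ^ (n + 1)).degree ≤ (n : WithBot ℕ)) {f : K[X]} {n : ℕ}
    (hf : f.degree ≤ n) : (L f).coeff (n + 1) = γ n * f.coeff n := by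
  have := coeff_eq_zero_of_degree_lt
    ((degree_map_sub_C_mul_X_pow_le hL hf).trans_lt (Nat.cast_lt.2 n.lt_succ_self))
  rwa [coeff_sub, coeff_C_mul_X_pow, if_pos rfl, sub_eq_zero] at this

theorem apply_map_mul_self_eq_zero [CharZero K] {J : K[X] →ₗ[K] K}
    (hskew : ∀ f g, J (L f * g) = -J (f * L g)) (f : K[X]) : J (L f * f) = 0 := by
  have h := hskew f f
  rw [mul_comm f] at h
  exact self_eq_neg.1 h

end RaisingOperator

namespace Sequence

theorem coeff_self (S : Sequence K) (n : ℕ) : (S n).coeff n = (S n).leadingCoeff := by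
  rw [leadingCoeff, S.natDegree_eq]

structure IsOrthogonal (J : K[X] →ₗ[K] K) (S : Sequence K) : Prop where
  apply_mul_eq_zero : ∀ ⦃m n : ℕ⦄, m ≠ n → J (S m * S n) = 0
  apply_mul_self_ne_zero : ∀ n, J (S n * S n) ≠ 0

namespace IsOrthogonal

variable {J : K[X] →ₗ[K] K} {S : Sequence K}

theorem apply_mul_eq_zero_of_degree_lt (hS : S.IsOrthogonal J) {q : K[X]} {n : ℕ}
    (hq : q.degree < n) : J (q * S n) = 0 := by
  have hspan : degreeLT K n ≤ LinearMap.ker (J ∘ₗ LinearMap.mulRight K (S n)) := by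
    rw [← S.span_degreeLT fun i _ ↦ (leadingCoeff_ne_zero.2 (S.ne_zero i)).isUnit,
      Submodule.span_le]
    rintro _ ⟨i, hi, rfl⟩
    exact hS.apply_mul_eq_zero (Set.mem_Iio.1 hi).ne
  exact hspan (mem_degreeLT.2 hq)

theorem apply_mul_eq_of_degree_le (hS : S.IsOrthogonal J) {q : K[X]} {n : ℕ}
    (hq : q.degree ≤ n) : J (q * S n) = q.coeff n / (S n).leadingCoeff * J (S n * S n) := by
  set c := q.coeff n / (S n).leadingCoeff
  have hlow : (q - c • S n).degree < n := by
    rw [degree_lt_iff_coeff_zero]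
    intro i hi
    rcases hi.eq_or_lt with rfl | hlt
    · rw [coeff_sub, coeff_smul, S.coeff_self, smul_eq_mul,
        div_mul_cancel₀ _ (leadingCoeff_ne_zero.2 (S.ne_zero n)), sub_self]
    · rw [coeff_sub, coeff_smul, coeff_eq_zero_of_degree_lt (hq.trans_lt (Nat.cast_lt.2 hlt)),
        coeff_eq_zero_of_degree_lt ((S.degree_eq n).trans_lt (Nat.cast_lt.2 hlt)), smul_zero,
        sub_zero]
  calc J (q * S n) = J ((q - c • S n) * S n) + c * J (S n * S n) := by
        rw [sub_mul, map_sub, smul_mul_assoc, map_smul, smul_eq_mul, sub_add_cancel]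
    _ = c * J (S n * S n) := by rw [hS.apply_mul_eq_zero_of_degree_lt hlow, zero_add]

theorem eq_zero_of_forall_apply_mul_eq_zero (hS : S.IsOrthogonal J) {r : K[X]} {N : ℕ}
    (hr : r.degree ≤ N) (horth : ∀ j ≤ N, J (r * S j) = 0) : r = 0 := by
  by_contra hr0
  have h := hS.apply_mul_eq_of_degree_le (degree_le_natDegree (p := r))
  rw [horth _ (natDegree_le_iff_degree_le.2 hr), coeff_natDegree, eq_comm] at h
  simp [hr0, S.ne_zero, hS.apply_mul_self_ne_zero] at h

variable {L : K[X] →ₗ[K] K[X]} {γ : ℕ → K}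

theorem apply_map_mul_succ (hS : S.IsOrthogonal J)
    (hL : ∀ n : ℕ, (L (X ^ n) - C (γ n) * X ^ (n + 1)).degree ≤ (n : WithBot ℕ)) (n : ℕ) :
    J (L (S n) * S (n + 1)) =
      γ n * (S n).leadingCoeff / (S (n + 1)).leadingCoeff * J (S (n + 1) * S (n + 1)) := by
  have hn : (S n).degree ≤ n := (S.degree_eq n).le
  rw [hS.apply_mul_eq_of_degree_le (degree_map_le_of_degree_le hL hn),
    coeff_map_succ_of_degree_le hL hn, S.coeff_self]

theorem map_succ_eq [CharZero K] (hS : S.IsOrthogonal J)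
    (hskew : ∀ f g, J (L f * g) = -J (f * L g))
    (hL : ∀ n : ℕ, (L (X ^ n) - C (γ n) * X ^ (n + 1)).degree ≤ (n : WithBot ℕ)) (m : ℕ) :
    L (S (m + 1)) =
      (γ (m + 1) * (S (m + 1)).leadingCoeff / (S (m + 2)).leadingCoeff) • S (m + 2) -
        (γ m * (S m).leadingCoeff / (S (m + 1)).leadingCoeff * J (S (m + 1) * S (m + 1)) /
          J (S m * S m)) • S m := by
  set a := γ (m + 1) * (S (m + 1)).leadingCoeff / (S (m + 2)).leadingCoeff
  set c := γ m * (S m).leadingCoeff / (S (m + 1)).leadingCoeff * J (S (m + 1) * S (m + 1)) /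
    J (S m * S m)
  rw [← sub_eq_zero]
  refine hS.eq_zero_of_forall_apply_mul_eq_zero (N := m + 2) ?_ fun j hj ↦ ?_
  · refine mem_degreeLE.1 (Submodule.sub_mem _ (mem_degreeLE.2 ?_) (Submodule.sub_mem _
      (Submodule.smul_mem _ _ (mem_degreeLE.2 (S.degree_eq _).le))
      (Submodule.smul_mem _ _ (mem_degreeLE.2 ?_))))
    · exact degree_map_le_of_degree_le hL (S.degree_eq _).le
    · exact (S.degree_eq m).trans_le (Nat.cast_le.2 (by omega))
  have hpair : J ((L (S (m + 1)) - (a • S (m + 2) - c • S m)) * S j) =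
      J (L (S (m + 1)) * S j) - a * J (S (m + 2) * S j) + c * J (S m * S j) := by
    simp only [sub_mul, smul_mul_assoc, map_sub, map_smul, smul_eq_mul]
    ring
  rw [hpair]
  obtain hjm | rfl | rfl | rfl : j < m ∨ j = m ∨ j = m + 1 ∨ j = m + 2 := by omega
  · have hlow : (L (S j)).degree < (m + 1 : ℕ) :=
      (degree_map_le_of_degree_le hL (S.degree_eq j).le).trans_lt (Nat.cast_lt.2 (by omega))
    rw [hskew, mul_comm, hS.apply_mul_eq_zero_of_degree_lt hlow,
      hS.apply_mul_eq_zero (by omega), hS.apply_mul_eq_zero (by omega)]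
    ring
  · rw [hskew, mul_comm, hS.apply_map_mul_succ hL,
      hS.apply_mul_eq_zero (m := j + 2) (n := j) (by omega), mul_zero, sub_zero,
      div_mul_cancel₀ _ (hS.apply_mul_self_ne_zero j)]
    ring
  · rw [apply_map_mul_self_eq_zero hskew, hS.apply_mul_eq_zero (by omega),
      hS.apply_mul_eq_zero (by omega)]
    ring
  · rw [hS.apply_map_mul_succ hL, hS.apply_mul_eq_zero (m := m) (n := m + 2) (by omega)]
    ring

end IsOrthogonal

end Sequence

end Polynomial

noncomputable def momentFunctional (μ : Measure ℝ)
    (hint : ∀ f : ℝ[X], Integrable (fun x ↦ f.eval x) μ) : ℝ[X] →ₗ[ℝ] ℝ where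
  toFun f := ∫ x, f.eval x ∂μ
  map_add' f g := by simpa only [eval_add] using integral_add (hint f) (hint g)
  map_smul' a f := by
    simpa only [eval_smul, smul_eq_mul, RingHom.id_apply] using integral_const_mul a _

theorem momentFunctional_mul (μ : Measure ℝ) (hint : ∀ f : ℝ[X], Integrable (fun x ↦ f.eval x) μ)
    (f g : ℝ[X]) : momentFunctional μ hint (f * g) = ∫ x, f.eval x * g.eval x ∂μ := by
  simp [momentFunctional]

theorem lowering_relation_skew_symmetric_general
    (μ : Measure ℝ)
    (hint : ∀ f : ℝ[X], Integrable (fun x => f.eval x) μ)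
    (p : ℕ → ℝ[X]) (k h A B Cc : ℕ → ℝ)
    (hdeg : ∀ n, (p n).degree = n)
    (hlead : ∀ n, (p n).leadingCoeff = k n)
    (hh : ∀ n, 0 < h n)
    (horth : ∀ n m, (∫ x, (p n).eval x * (p m).eval x ∂μ) = if n = m then h n else 0)
    (hA : ∀ n, A n = k n / k (n + 1))
    (hC : ∀ n, 1 ≤ n → Cc n = A (n - 1) * h n / h (n - 1))
    (hrec : ∀ n, X * p n =
      C (A n) * p (n + 1) + C (B n) * p n +
        C (Cc n) * (if n = 0 then 0 else p (n - 1)))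
    (L : ℝ[X] →ₗ[ℝ] ℝ[X]) (γ : ℕ → ℝ)
    (hskew : ∀ f g : ℝ[X],
      (∫ x, (L f).eval x * g.eval x ∂μ) = - ∫ x, f.eval x * (L g).eval x ∂μ)
    (hLdeg : ∀ n : ℕ, ∃ r : ℝ[X], r.degree ≤ (n : ℕ) ∧
      L (X ^ n) = C (γ n) * X ^ (n + 1) + r) :
    ∀ n : ℕ, 1 ≤ n →
      - (C (γ n) * (X - C (B n)) * p n) + L (p n) =
        - (C ((γ n + γ (n - 1)) * Cc n) * p (n - 1)) := by
  intro n hn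
  obtain ⟨m, rfl⟩ := Nat.exists_eq_add_of_le' hn
  set J := momentFunctional μ hint
  have hnorm : ∀ n, J (p n * p n) = h n := fun n ↦ by
    simpa [J, momentFunctional_mul] using horth n n
  have hS : (⟨p, hdeg⟩ : Sequence ℝ).IsOrthogonal J :=
    ⟨fun i j hij ↦ by simpa [J, momentFunctional_mul, hij] using horth i j,
      fun n ↦ (hnorm n).trans_ne (hh n).ne'⟩
  have hLp := hS.map_succ_eq (L := L) (γ := γ)
    (fun f g ↦ by simpa only [J, momentFunctional_mul] using hskew f g)
    (fun n ↦ by obtain ⟨r, hr, e⟩ := hLdeg n; rwa [e, add_sub_cancel_left]) m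
  have hrec' := hrec (m + 1)
  simp only [Nat.add_sub_cancel, add_eq_zero, one_ne_zero, and_false, if_false] at hrec' ⊢
  dsimp only at hLp
  rw [hlead, hlead, hlead, hnorm, hnorm] at hLp
  have hA' : γ (m + 1) * k (m + 1) / k (m + 2) = γ (m + 1) * A (m + 1) := by rw [hA]; ring
  have hC' : γ m * k m / k (m + 1) * h (m + 1) / h m = γ m * Cc (m + 1) := by
    rw [hC (m + 1) hn, Nat.add_sub_cancel, hA]; ring
  rw [hA', hC'] at hLp
  linear_combination (norm := skip) hLp - C (γ (m + 1)) * hrec'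
  simp only [smul_eq_C_mul, C_mul, C_add]
  ring

/-- **Lowering relation** (Proposition 2.1, lowering relation part). -/
theorem lowering_relation_skew_symmetric
    (μ : Measure ℝ)
    (hint : ∀ f : ℝ[X], Integrable (fun x => f.eval x) μ)
    (p : ℕ → ℝ[X]) (k h A B Cc : ℕ → ℝ)
    (hdeg : ∀ n, (p n).degree = n)
    (hlead : ∀ n, (p n).leadingCoeff = k n)
    (hk : ∀ n, k n ≠ 0)
    (hh : ∀ n, 0 < h n)
    (horth : ∀ n m, (∫ x, (p n).eval x * (p m).eval x ∂μ) = if n = m then h n else 0)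
    (hA : ∀ n, A n = k n / k (n + 1))
    (hC : ∀ n, 1 ≤ n → Cc n = A (n - 1) * h n / h (n - 1))
    (hrec : ∀ n, X * p n =
      C (A n) * p (n + 1) + C (B n) * p n +
        C (Cc n) * (if n = 0 then 0 else p (n - 1)))
    (L : ℝ[X] →ₗ[ℝ] ℝ[X]) (γ : ℕ → ℝ)
    (hskew : ∀ f g : ℝ[X],
      (∫ x, (L f).eval x * g.eval x ∂μ) = - ∫ x, f.eval x * (L g).eval x ∂μ)
    (hγ : ∀ n, γ n ≠ 0)
    (hLdeg : ∀ n : ℕ, ∃ r : ℝ[X], r.degree ≤ (n : ℕ) ∧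
      L (X ^ n) = C (γ n) * X ^ (n + 1) + r) :
    ∀ n : ℕ, 1 ≤ n →
      - (C (γ n) * (X - C (B n)) * p n) + L (p n) =
        - (C ((γ n + γ (n - 1)) * Cc n) * p (n - 1)) :=
  lowering_relation_skew_symmetric_general μ hint p k h A B Cc hdeg hlead hh horth hA hC hrec L γ
    hskew hLdeg
end

section
/- Let L : ℝ[X] → ℝ[X] be a linear map that is skew symmetric with respect to the inner product, i.e. ⟨L f, g⟩ = −⟨f, L g⟩ for all polynomials f, g, and that satisfies L(x^n) = γ_n x^{n+1} + (terms of degree ≤ n) with γ_n ≠ 0 for every n ≥ 0. Then for every n ≥ 1 the raising relation γ_{n−1} (x − B_n) p_n(x) + (L p_n)(x) = (γ_n + γ_{n−1}) A_n p_{n+1}(x) holds. -/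
/-!
Because `L` raises degrees by exactly one, `L p_n` has degree `n + 1`, and skew-symmetry gives
`⟨p_j, L p_n⟩ = -⟨p_n, L p_j⟩`. This vanishes for `j + 1 < n` by degree and for `j = n` by
skewness, so `L p_n` has components only along `p_{n+1}` and `p_{n-1}`, and both are read off from
leading coefficients: `L p_n = γ_n A_n p_{n+1} - γ_{n-1} C_n p_{n-1}`. Adding `γ_{n-1}` times the
three-term recurrence `(x - B_n) p_n = A_n p_{n+1} + C_n p_{n-1}` gives the raising relation.
-/

open Polynomial MeasureTheory

section RaisesDegree

variable {R : Type*} [Semiring R]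

def RaisesDegree (L : R[X] →ₗ[R] R[X]) (γ : ℕ → R) : Prop :=
  ∀ n : ℕ, ∃ r : R[X], r.degree ≤ n ∧ L (X ^ n) = C (γ n) * X ^ (n + 1) + r

variable {L : R[X] →ₗ[R] R[X]} {γ : ℕ → R}

theorem RaisesDegree.coeff_succ_apply_X_pow (hL : RaisesDegree L γ) {i j : ℕ} (hij : i ≤ j) :
    (L (X ^ i)).coeff (j + 1) = if j = i then γ j else 0 := by
  obtain ⟨r, hr, hLr⟩ := hL i
  have hr' : r.coeff (j + 1) = 0 :=
    coeff_eq_zero_of_degree_lt (hr.trans_lt (by exact_mod_cast Nat.lt_succ_of_le hij))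
  rw [hLr, coeff_add, coeff_C_mul_X_pow, hr', add_zero]
  rcases eq_or_ne j i with rfl | hji <;> simp [*]

theorem RaisesDegree.coeff_succ_apply (hL : RaisesDegree L γ) {f : R[X]} {j : ℕ}
    (hf : f.degree ≤ j) : (L f).coeff (j + 1) = f.coeff j * γ j := by
  have hf' : f.natDegree < j + 1 := Nat.lt_succ_of_le (natDegree_le_iff_degree_le.mpr hf)
  conv_lhs => rw [as_sum_range' f (j + 1) hf']
  simp only [← smul_X_eq_monomial, map_sum, map_smul, finsetSum_coeff, coeff_smul, smul_eq_mul]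
  rw [Finset.sum_congr rfl fun i hi => by
    rw [hL.coeff_succ_apply_X_pow (Nat.lt_succ_iff.mp (Finset.mem_range.mp hi))]]
  simp [mul_ite]

theorem RaisesDegree.degree_apply_le (hL : RaisesDegree L γ) {f : R[X]} {n : ℕ}
    (hf : f.degree ≤ n) : (L f).degree ≤ (n + 1 : ℕ) := by
  rw [degree_le_iff_coeff_zero]
  intro i hi
  have hi' : n + 1 < i := by exact_mod_cast hi
  obtain ⟨j, rfl⟩ : ∃ j, i = j + 1 := ⟨i - 1, by omega⟩
  have hnj : n < j := by omega
  rw [hL.coeff_succ_apply (hf.trans (by exact_mod_cast hnj.le)),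
    coeff_eq_zero_of_degree_lt (hf.trans_lt (by exact_mod_cast hnj)), zero_mul]

end RaisesDegree

theorem Polynomial.coeff_eq_leadingCoeff_of_degree_eq {R : Type*} [Semiring R] {q : R[X]} {n : ℕ}
    (hq : q.degree = n) : q.coeff n = q.leadingCoeff := by
  rw [leadingCoeff, natDegree_eq_of_degree_eq_some hq]

theorem Polynomial.degree_sub_C_mul_lt_of_degree_le {K : Type*} [Field K] {f q : K[X]} {n : ℕ}
    (hq : q.degree = n) (hf : f.degree ≤ n) :
    (f - C (f.coeff n / q.leadingCoeff) * q).degree < n := by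
  have hq0 : q ≠ 0 := by rintro rfl; simp at hq
  rw [degree_lt_iff_coeff_zero]
  intro m hm
  rcases hm.eq_or_lt with rfl | hlt
  · rw [coeff_sub, coeff_C_mul, coeff_eq_leadingCoeff_of_degree_eq hq,
      div_mul_cancel₀ _ (leadingCoeff_ne_zero.mpr hq0), sub_self]
  · rw [coeff_sub, coeff_C_mul, coeff_eq_zero_of_degree_lt (hf.trans_lt (by exact_mod_cast hlt)),
      coeff_eq_zero_of_degree_lt (hq.trans_lt (by exact_mod_cast hlt)), mul_zero, sub_zero]

theorem LinearMap.IsSkewAdjoint.apply_map_eq_neg {K M : Type*} [Field K] [AddCommGroup M]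
    [Module K M] {B : LinearMap.BilinForm K M} {L : M →ₗ[K] M} (hB : B.IsSymm)
    (hL : LinearMap.IsSkewAdjoint B L) (x y : M) : B y (L x) = -B x (L y) := by
  rw [← hB.eq, hL x y, Pi.neg_apply, map_neg]

theorem LinearMap.IsSkewAdjoint.apply_map_self_eq_zero {K M : Type*} [Field K] [NeZero (2 : K)]
    [AddCommGroup M] [Module K M] {B : LinearMap.BilinForm K M} {L : M →ₗ[K] M} (hB : B.IsSymm)
    (hL : LinearMap.IsSkewAdjoint B L) (x : M) : B x (L x) = 0 := by
  have h := hL.apply_map_eq_neg hB x x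
  rwa [eq_neg_iff_add_eq_zero, ← two_mul, mul_eq_zero, or_iff_right two_ne_zero] at h

namespace OrthogonalPolynomials

variable {K : Type*} [Field K] {B : LinearMap.BilinForm K K[X]} {p : ℕ → K[X]}
  (hdeg : ∀ n, (p n).degree = n) (hp : B.iIsOrtho p)
include hdeg hp

theorem apply_eq_zero_of_degree_lt {f : K[X]} {m : ℕ} (hf : f.degree < m) : B (p m) f = 0 := by
  suffices ∀ n : ℕ, ∀ f : K[X], f.degree < n → ∀ m, n ≤ m → B (p m) f = 0 from
    this m f hf m le_rfl
  intro n
  induction n with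
  | zero =>
    intro f hf m _
    rw [show f = 0 by simpa using hf, map_zero]
  | succ n ih =>
    intro f hf m hm
    have hg := degree_sub_C_mul_lt_of_degree_le (hdeg n)
      (Order.le_of_lt_succ (by exact_mod_cast hf))
    rw [← sub_add_cancel f (C (f.coeff n / (p n).leadingCoeff) * p n), map_add,
      ih _ hg m (by omega), ← smul_eq_C_mul, map_smul, hp (show m ≠ n by omega), smul_zero,
      zero_add]

theorem apply_eq_coeff_div_mul {f : K[X]} {m : ℕ} (hf : f.degree ≤ m) :
    B (p m) f = f.coeff m / (p m).leadingCoeff * B (p m) (p m) := by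
  have hg := degree_sub_C_mul_lt_of_degree_le (hdeg m) hf
  conv_lhs => rw [← sub_add_cancel f (C (f.coeff m / (p m).leadingCoeff) * p m)]
  rw [map_add, apply_eq_zero_of_degree_lt hdeg hp hg, ← smul_eq_C_mul, map_smul, smul_eq_mul,
    zero_add]

theorem eq_zero_of_forall_apply_eq_zero (hnorm : ∀ n, B (p n) (p n) ≠ 0) {q : K[X]} {N : ℕ}
    (hq : q.degree ≤ N) (horth : ∀ j ≤ N, B (p j) q = 0) : q = 0 := by
  by_contra hq0
  have h := apply_eq_coeff_div_mul hdeg hp (degree_le_natDegree (p := q))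
  rw [horth _ (natDegree_le_iff_degree_le.mpr hq), eq_comm] at h
  have hp0 : p q.natDegree ≠ 0 := by intro h0; simpa [h0] using hdeg q.natDegree
  rw [← leadingCoeff] at h
  simp [hq0, hp0, hnorm] at h

variable {L : K[X] →ₗ[K] K[X]} {γ : ℕ → K} (hL : RaisesDegree L γ)
include hL

theorem apply_succ_map (j : ℕ) :
    B (p (j + 1)) (L (p j)) =
      (p j).leadingCoeff * γ j / (p (j + 1)).leadingCoeff * B (p (j + 1)) (p (j + 1)) := by
  rw [apply_eq_coeff_div_mul hdeg hp (hL.degree_apply_le (hdeg j).le),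
    hL.coeff_succ_apply (hdeg j).le, coeff_eq_leadingCoeff_of_degree_eq (hdeg j)]

theorem apply_map_eq_zero_of_succ_lt {j n : ℕ} (hjn : j + 1 < n) : B (p n) (L (p j)) = 0 :=
  apply_eq_zero_of_degree_lt hdeg hp
    ((hL.degree_apply_le (hdeg j).le).trans_lt (by exact_mod_cast hjn))

theorem map_succ_eq_of_isSkewAdjoint [NeZero (2 : K)] (hB : B.IsSymm)
    (hnorm : ∀ n, B (p n) (p n) ≠ 0) (hskew : LinearMap.IsSkewAdjoint B L) (m : ℕ) :
    L (p (m + 1)) =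
      C (γ (m + 1) * ((p (m + 1)).leadingCoeff / (p (m + 2)).leadingCoeff)) * p (m + 2) -
      C (γ m * ((p m).leadingCoeff / (p (m + 1)).leadingCoeff * B (p (m + 1)) (p (m + 1)) /
        B (p m) (p m))) * p m := by
  rw [← sub_eq_zero]
  simp only [← smul_eq_C_mul]
  refine eq_zero_of_forall_apply_eq_zero hdeg hp hnorm (N := m + 2) ?_ fun j hj => ?_
  · refine (degree_sub_le _ _).trans (max_le (hL.degree_apply_le (hdeg _).le) ?_)
    refine (degree_sub_le _ _).trans (max_le ?_ ?_)
    · exact (degree_smul_le _ _).trans (hdeg _).le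
    · exact (degree_smul_le _ _).trans
        ((hdeg m).trans_le (by exact_mod_cast (by omega : m ≤ m + 2)))
  simp only [map_sub, map_smul, smul_eq_mul]
  rcases (by omega : j = m + 2 ∨ j = m + 1 ∨ j = m ∨ j < m) with rfl | rfl | rfl | hjm
  · rw [apply_succ_map hdeg hp hL, hp (show m + 2 ≠ m by omega)]
    ring
  · rw [hskew.apply_map_self_eq_zero hB, hp (show m + 1 ≠ m + 2 by omega),
      hp (show m + 1 ≠ m by omega)]
    ring
  · rw [hskew.apply_map_eq_neg hB, apply_succ_map hdeg hp hL, hp (show j ≠ j + 2 by omega)]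
    field_simp [hnorm j]
    ring
  · rw [hskew.apply_map_eq_neg hB,
      apply_map_eq_zero_of_succ_lt hdeg hp hL (by omega : j + 1 < m + 1),
      hp (show j ≠ m + 2 by omega), hp (show j ≠ m by omega)]
    ring

end OrthogonalPolynomials

theorem integrable_eval_mul_eval {μ : Measure ℝ}
    (hint : ∀ f : ℝ[X], Integrable (fun x => f.eval x) μ) (f g : ℝ[X]) :
    Integrable (fun x => f.eval x * g.eval x) μ := by
  simpa using hint (f * g)

noncomputable def integralBilinForm (μ : Measure ℝ)
    (hint : ∀ f : ℝ[X], Integrable (fun x => f.eval x) μ) : LinearMap.BilinForm ℝ ℝ[X] :=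
  LinearMap.mk₂ ℝ (fun f g => ∫ x, f.eval x * g.eval x ∂μ)
    (fun f₁ f₂ g => by
      simp only [eval_add, add_mul]
      exact integral_add (integrable_eval_mul_eval hint _ _) (integrable_eval_mul_eval hint _ _))
    (fun c f g => by simp only [eval_smul, smul_eq_mul, mul_assoc, integral_const_mul])
    (fun f g₁ g₂ => by
      simp only [eval_add, mul_add]
      exact integral_add (integrable_eval_mul_eval hint _ _) (integrable_eval_mul_eval hint _ _))
    (fun c f g => by simp only [eval_smul, smul_eq_mul, mul_left_comm _ c, integral_const_mul])

@[simp]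
theorem integralBilinForm_apply {μ : Measure ℝ}
    {hint : ∀ f : ℝ[X], Integrable (fun x => f.eval x) μ} (f g : ℝ[X]) :
    integralBilinForm μ hint f g = ∫ x, f.eval x * g.eval x ∂μ :=
  rfl

theorem raising_relation_skew_symmetric_general
    (μ : Measure ℝ)
    (hint : ∀ f : ℝ[X], Integrable (fun x => f.eval x) μ)
    (p : ℕ → ℝ[X]) (k h A B Cc : ℕ → ℝ)
    (hdeg : ∀ n, (p n).degree = n)
    (hlead : ∀ n, (p n).leadingCoeff = k n)
    (hh : ∀ n, 0 < h n)
    (horth : ∀ n m, (∫ x, (p n).eval x * (p m).eval x ∂μ) = if n = m then h n else 0)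
    (hA : ∀ n, A n = k n / k (n + 1))
    (hC : ∀ n, 1 ≤ n → Cc n = A (n - 1) * h n / h (n - 1))
    (hrec : ∀ n, X * p n =
      C (A n) * p (n + 1) + C (B n) * p n +
        C (Cc n) * (if n = 0 then 0 else p (n - 1)))
    (L : ℝ[X] →ₗ[ℝ] ℝ[X]) (γ : ℕ → ℝ)
    (hskew : ∀ f g : ℝ[X],
      (∫ x, (L f).eval x * g.eval x ∂μ) = - ∫ x, f.eval x * (L g).eval x ∂μ)
    (hLdeg : ∀ n : ℕ, ∃ r : ℝ[X], r.degree ≤ (n : ℕ) ∧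
      L (X ^ n) = C (γ n) * X ^ (n + 1) + r) :
    ∀ n : ℕ, 1 ≤ n →
      C (γ (n - 1)) * (X - C (B n)) * p n + L (p n) =
        C ((γ n + γ (n - 1)) * A n) * p (n + 1) := by
  intro n hn
  obtain ⟨m, rfl⟩ := Nat.exists_eq_add_of_le' hn
  set β := integralBilinForm μ hint
  have hnorm : ∀ n, β (p n) (p n) = h n := fun n => by simpa [β] using horth n n
  have hp : β.iIsOrtho p := fun i j hij => by simpa [β, Function.onFun, hij] using horth i j
  have hsymm : β.IsSymm := ⟨fun f g => by simp only [β, integralBilinForm_apply, mul_comm]⟩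
  have hskew' : LinearMap.IsSkewAdjoint β L := fun f g => by simp [β, hskew, integral_neg]
  have key := OrthogonalPolynomials.map_succ_eq_of_isSkewAdjoint hdeg hp hLdeg hsymm
    (fun n => hnorm n ▸ (hh n).ne') hskew' m
  have hC' := hC (m + 1) (by omega)
  have hrec' := hrec (m + 1)
  simp only [Nat.add_sub_cancel, Nat.add_one_ne_zero, if_false] at hC' hrec' ⊢
  rw [hnorm, hnorm, hlead, hlead, hlead, ← hA, ← hA, ← hC'] at key
  simp only [map_mul, map_add] at key ⊢
  linear_combination C (γ m) * hrec' + key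

/-- **Raising relation** (Proposition 2.1, raising relation part). -/
theorem raising_relation_skew_symmetric
    (μ : Measure ℝ)
    (hint : ∀ f : ℝ[X], Integrable (fun x => f.eval x) μ)
    (p : ℕ → ℝ[X]) (k h A B Cc : ℕ → ℝ)
    (hdeg : ∀ n, (p n).degree = n)
    (hlead : ∀ n, (p n).leadingCoeff = k n)
    (hk : ∀ n, k n ≠ 0)
    (hh : ∀ n, 0 < h n)
    (horth : ∀ n m, (∫ x, (p n).eval x * (p m).eval x ∂μ) = if n = m then h n else 0)
    (hA : ∀ n, A n = k n / k (n + 1))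
    (hC : ∀ n, 1 ≤ n → Cc n = A (n - 1) * h n / h (n - 1))
    (hrec : ∀ n, X * p n =
      C (A n) * p (n + 1) + C (B n) * p n +
        C (Cc n) * (if n = 0 then 0 else p (n - 1)))
    (L : ℝ[X] →ₗ[ℝ] ℝ[X]) (γ : ℕ → ℝ)
    (hskew : ∀ f g : ℝ[X],
      (∫ x, (L f).eval x * g.eval x ∂μ) = - ∫ x, f.eval x * (L g).eval x ∂μ)
    (hγ : ∀ n, γ n ≠ 0)
    (hLdeg : ∀ n : ℕ, ∃ r : ℝ[X], r.degree ≤ (n : ℕ) ∧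
      L (X ^ n) = C (γ n) * X ^ (n + 1) + r) :
    ∀ n : ℕ, 1 ≤ n →
      C (γ (n - 1)) * (X - C (B n)) * p n + L (p n) =
        C ((γ n + γ (n - 1)) * A n) * p (n + 1) :=
  raising_relation_skew_symmetric_general μ hint p k h A B Cc hdeg hlead hh horth hA hC hrec L γ
    hskew hLdeg
end

section
/- Let L : ℝ[X] → ℝ[X] be a linear map that is skew symmetric with respect to the inner product, i.e. ⟨L f, g⟩ = −⟨f, L g⟩ for all polynomials f, g, and that satisfies L(x^n) = γ_n x^{n+1} + (terms of degree ≤ n) with γ_n ≠ 0 for every n ≥ 0. Define a linear map D : ℝ[X] → ℝ[X] on monomials by D(1) := 0 and D(x^n) := Σ_{k=0}^{n−1} x^k · L(x^{n−k−1}) for n ≥ 1. Then: (i) D X − X D = L, where X is the multiplication operator (X f)(x) := x f(x); (ii) D is symmetric with respect to the inner product, i.e. ⟨D f, g⟩ = ⟨f, D g⟩ for all polynomials f, g; (iii) D(x^n) = λ_n x^n + (terms of degree < n), where λ_0 = 0 and λ_{n+1} − λ_n = γ_n (so λ_{n+1} ≠ λ_n for all n). -/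
/-!
Write `φ` for integration against `μ`, so that `⟨f, g⟩ = φ (f * g)` depends only on the product.
Part (i) is a telescoping of the defining sums. For (ii), the symmetry defect
`S f g = φ (D f * g) - φ (f * D g)` satisfies `S (X * f) g = S f (X * g)` by (i) and the skew
symmetry of `L`, hence `S (p * f) g = S f (p * g)` for every polynomial `p`. Therefore
`S f g = S 1 (f * g) = -φ (D (f * g))`, and `φ (D h) = S h 1 = S 1 h = -φ (D h)` shows that
`φ ∘ D` vanishes. Part (iii) follows by induction from `D (X ^ (n + 1)) = X * D (X ^ n) + L (X ^ n)`.
-/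

open Polynomial MeasureTheory

namespace Polynomial

variable {R : Type*} [CommRing R] {L D : R[X] →ₗ[R] R[X]}

theorem map_X_mul_sub_X_mul_map_of_map_X_pow
    (hD : ∀ n : ℕ, D (X ^ n) = ∑ k ∈ Finset.range n, X ^ k * L (X ^ (n - k - 1))) (f : R[X]) :
    D (X * f) - X * D f = L f := by
  suffices D ∘ₗ LinearMap.mulLeft R X - LinearMap.mulLeft R X ∘ₗ D = L from
    LinearMap.congr_fun this f
  refine lhom_ext' fun n => LinearMap.ext fun a => ?_
  have hmon : (monomial n a : R[X]) = a • X ^ n := by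
    rw [smul_eq_C_mul, C_mul_X_pow_eq_monomial]
  suffices D (X ^ (n + 1)) - X * D (X ^ n) = L (X ^ n) by
    simp only [LinearMap.comp_apply, LinearMap.sub_apply, LinearMap.mulLeft_apply, hmon,
      map_smul, ← pow_succ', this]
  rw [hD, hD, Finset.sum_range_succ', Finset.mul_sum]
  simp only [pow_succ', mul_assoc, pow_zero, one_mul, Nat.sub_zero, Nat.add_sub_cancel,
    Nat.add_sub_add_right]
  ring

theorem exists_degree_lt_map_X_pow_eq (hcomm : ∀ f, D (X * f) - X * D f = L f) (hD1 : D 1 = 0)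
    (γ : ℕ → R) (hL : ∀ n : ℕ, ∃ r : R[X], r.degree ≤ n ∧ L (X ^ n) = C (γ n) * X ^ (n + 1) + r)
    (n : ℕ) :
    ∃ r : R[X], r.degree < n ∧ D (X ^ n) = C (∑ k ∈ Finset.range n, γ k) * X ^ n + r := by
  induction n with
  | zero => exact ⟨0, by simp, by simpa using hD1⟩
  | succ n ih =>
    obtain ⟨r, hr, hDr⟩ := ih
    obtain ⟨s, hs, hLs⟩ := hL n
    refine ⟨X * r + s, ?_, ?_⟩
    · have hXr : (X * r).degree < ↑(n + 1) := by
        rw [degree_lt_iff_coeff_zero] at hr ⊢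
        rintro (_ | m) hm
        · omega
        · rw [coeff_X_mul]
          exact hr m (by omega)
      exact (degree_add_le _ _).trans_lt
        (max_lt hXr (hs.trans_lt (WithBot.coe_lt_coe.mpr n.lt_succ_self)))
    · rw [pow_succ', sub_eq_iff_eq_add'.mp (hcomm _), hDr, hLs, Finset.sum_range_succ, C_add]
      ring

variable (φ : R[X] →ₗ[R] R)

noncomputable def symmDefect (D : R[X] →ₗ[R] R[X]) (f g : R[X]) : R :=
  φ (D f * g) - φ (f * D g)

theorem symmDefect_X_mul (hcomm : ∀ f, D (X * f) - X * D f = L f)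
    (hskew : ∀ f g, φ (L f * g) = -φ (f * L g)) (f g : R[X]) :
    symmDefect φ D (X * f) g = symmDefect φ D f (X * g) := by
  rw [symmDefect, symmDefect, sub_eq_iff_eq_add'.mp (hcomm f), sub_eq_iff_eq_add'.mp (hcomm g)]
  have := hskew f g
  simp only [add_mul, mul_add, map_add]
  ring_nf at this ⊢
  linear_combination this

theorem symmDefect_mul (hcomm : ∀ f, D (X * f) - X * D f = L f)
    (hskew : ∀ f g, φ (L f * g) = -φ (f * L g)) (p f g : R[X]) :
    symmDefect φ D (p * f) g = symmDefect φ D f (p * g) := by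
  induction p using Polynomial.induction_on generalizing f g with
  | C a => simp only [symmDefect, ← smul_eq_C_mul, smul_mul_assoc, map_smul, mul_smul_comm]
  | add p q hp hq =>
    simp only [symmDefect, add_mul, map_add, mul_add] at hp hq ⊢
    linear_combination hp f g + hq f g
  | monomial n a h =>
    rw [pow_succ, ← mul_assoc, mul_assoc, h, symmDefect_X_mul φ hcomm hskew, mul_left_comm X]
    simp only [mul_assoc]

theorem map_mul_comm_of_skew [IsAddTorsionFree R] (hcomm : ∀ f, D (X * f) - X * D f = L f)
    (hskew : ∀ f g, φ (L f * g) = -φ (f * L g)) (hD1 : D 1 = 0) (f g : R[X]) :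
    φ (D f * g) = φ (f * D g) := by
  have hbal := symmDefect_mul φ hcomm hskew
  have hφD (h : R[X]) : φ (D h) = 0 := by
    have := hbal h 1 1
    simp only [symmDefect, mul_one, hD1, mul_zero, map_zero, sub_zero, one_mul, zero_mul,
      zero_sub] at this
    exact self_eq_neg.mp this
  have := hbal f 1 g
  simpa only [symmDefect, mul_one, hD1, zero_mul, one_mul, map_zero, hφD, sub_zero,
    sub_eq_zero] using this

end Polynomial

noncomputable def polynomialIntegral (μ : Measure ℝ)
    (hint : ∀ f : ℝ[X], Integrable (fun x => f.eval x) μ) : ℝ[X] →ₗ[ℝ] ℝ where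
  toFun f := ∫ x, f.eval x ∂μ
  map_add' f g := by simp only [eval_add]; exact integral_add (hint f) (hint g)
  map_smul' a f := by simp only [eval_smul, smul_eq_mul, integral_const_mul, RingHom.id_apply]

theorem polynomialIntegral_mul (μ : Measure ℝ)
    (hint : ∀ f : ℝ[X], Integrable (fun x => f.eval x) μ) (f g : ℝ[X]) :
    polynomialIntegral μ hint (f * g) = ∫ x, f.eval x * g.eval x ∂μ := by
  simp only [polynomialIntegral, LinearMap.coe_mk, AddHom.coe_mk, eval_mul]

theorem symmetric_operator_from_skew_general
    (μ : Measure ℝ)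
    (hint : ∀ f : ℝ[X], Integrable (fun x => f.eval x) μ)
    (L : ℝ[X] →ₗ[ℝ] ℝ[X]) (γ : ℕ → ℝ)
    (hskew : ∀ f g : ℝ[X],
      (∫ x, (L f).eval x * g.eval x ∂μ) = - ∫ x, f.eval x * (L g).eval x ∂μ)
    (hLdeg : ∀ n : ℕ, ∃ r : ℝ[X], r.degree ≤ (n : ℕ) ∧
      L (X ^ n) = C (γ n) * X ^ (n + 1) + r)
    (D : ℝ[X] →ₗ[ℝ] ℝ[X])
    (hD : ∀ n : ℕ, D (X ^ n) = ∑ k ∈ Finset.range n, X ^ k * L (X ^ (n - k - 1))) :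
    (∀ f : ℝ[X], D (X * f) - X * D f = L f) ∧
    (∀ f g : ℝ[X],
      (∫ x, (D f).eval x * g.eval x ∂μ) = ∫ x, f.eval x * (D g).eval x ∂μ) ∧
    (∃ lam : ℕ → ℝ, lam 0 = 0 ∧ (∀ n : ℕ, lam (n + 1) - lam n = γ n) ∧
      ∀ n : ℕ, ∃ r : ℝ[X], r.degree < (n : ℕ) ∧
        D (X ^ n) = C (lam n) * X ^ n + r) := by
  have hcomm := map_X_mul_sub_X_mul_map_of_map_X_pow hD
  have hD1 : D 1 = 0 := by simpa using hD 0
  simp only [← polynomialIntegral_mul μ hint] at hskew ⊢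
  refine ⟨hcomm, map_mul_comm_of_skew _ hcomm hskew hD1, fun n => ∑ k ∈ Finset.range n, γ k,
    Finset.sum_range_zero γ, fun n => ?_, exists_degree_lt_map_X_pow_eq hcomm hD1 γ hLdeg⟩
  simp only [Finset.sum_range_succ, add_sub_cancel_left]

/-- **Proposition 2.3.** From a skew symmetric degree-raising operator `L` one constructs a
symmetric operator `D` with `D(1) = 0`, `D(xⁿ) = Σ_{k=0}^{n-1} x^k L(x^{n-k-1})`, satisfying
`DX - XD = L` and `D(xⁿ) = λₙ xⁿ + lower order` with `λ₀ = 0`, `λₙ₊₁ - λₙ = γₙ`. -/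
theorem symmetric_operator_from_skew
    (μ : Measure ℝ)
    (hint : ∀ f : ℝ[X], Integrable (fun x => f.eval x) μ)
    (L : ℝ[X] →ₗ[ℝ] ℝ[X]) (γ : ℕ → ℝ)
    (hskew : ∀ f g : ℝ[X],
      (∫ x, (L f).eval x * g.eval x ∂μ) = - ∫ x, f.eval x * (L g).eval x ∂μ)
    (hγ : ∀ n, γ n ≠ 0)
    (hLdeg : ∀ n : ℕ, ∃ r : ℝ[X], r.degree ≤ (n : ℕ) ∧
      L (X ^ n) = C (γ n) * X ^ (n + 1) + r)
    (D : ℝ[X] →ₗ[ℝ] ℝ[X])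
    (hD : ∀ n : ℕ, D (X ^ n) = ∑ k ∈ Finset.range n, X ^ k * L (X ^ (n - k - 1))) :
    (∀ f : ℝ[X], D (X * f) - X * D f = L f) ∧
    (∀ f g : ℝ[X],
      (∫ x, (D f).eval x * g.eval x ∂μ) = ∫ x, f.eval x * (D g).eval x ∂μ) ∧
    (∃ lam : ℕ → ℝ, lam 0 = 0 ∧ (∀ n : ℕ, lam (n + 1) - lam n = γ n) ∧
      ∀ n : ℕ, ∃ r : ℝ[X], r.degree < (n : ℕ) ∧
        D (X ^ n) = C (lam n) * X ^ n + r) :=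
  symmetric_operator_from_skew_general μ hint L γ hskew hLdeg D hD
end

section
/- Let α, β > −1. The operator (L f)(x) := (1−x²) f'(x) − (1/2)(α−β+(α+β+2)x) f(x) acting on real polynomials is skew symmetric with respect to the Jacobi inner product: ⟨L f, g⟩ = −⟨f, L g⟩ for all polynomials f, g. -/
open Polynomial Set MeasureTheory

/-!
With `w(x) = (1-x)^α (1+x)^β`, the Leibniz rule turns `(Lf)g + f(Lg)` into
`w⁻¹ (f g (1-x)^{α+1} (1+x)^{β+1})'`. Since `α, β > -1`, the function under the derivative is
continuous on `[-1, 1]` and vanishes at both endpoints, so `⟨Lf, g⟩ + ⟨f, Lg⟩ = 0` by the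
fundamental theorem of calculus; the same bounds make every integrand integrable.
-/

/-- The first order differential operator `(Lf)(x) = (1-x²)f'(x) - ½(α-β+(α+β+2)x)f(x)`
acting on real polynomials. -/
noncomputable def jacobiL (α β : ℝ) (f : ℝ[X]) : ℝ[X] :=
  (1 - X ^ 2) * derivative f - C (1 / 2) * (C (α - β) + C (α + β + 2) * X) * f

/-- The backward shift operator `p ↦ (1-x)^{-α}(1+x)^{-β} ((1-x)^{α+1}(1+x)^{β+1} p)'` of the
Jacobi polynomials. -/
noncomputable def jacobiBackwardShift (α β : ℝ) (p : ℝ[X]) : ℝ[X] :=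
  (1 - X ^ 2) * derivative p - (C (α - β) + C (α + β + 2) * X) * p

theorem jacobiL_mul_add_mul_jacobiL (α β : ℝ) (f g : ℝ[X]) :
    jacobiL α β f * g + f * jacobiL α β g = jacobiBackwardShift α β (f * g) := by
  have h : C (1 / 2 : ℝ) * 2 = 1 := by
    rw [← C_ofNat, ← C_mul]; norm_num
  simp only [jacobiL, jacobiBackwardShift, derivative_mul]
  linear_combination (-(C (α - β) + C (α + β + 2) * X) * f * g) * h

theorem hasDerivAt_eval_mul_rpow_mul_rpow (α β : ℝ) (p : ℝ[X]) {x : ℝ} (hx : x ∈ Ioo (-1) 1) :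
    HasDerivAt (fun y => p.eval y * (1 - y) ^ (α + 1) * (1 + y) ^ (β + 1))
      ((jacobiBackwardShift α β p).eval x * (1 - x) ^ α * (1 + x) ^ β) x := by
  have hx₁ : 0 < 1 - x := by linarith [hx.2]
  have hx₂ : 0 < 1 + x := by linarith [hx.1]
  have h₁ : HasDerivAt (fun y : ℝ => (1 - y) ^ (α + 1)) (-1 * (α + 1) * (1 - x) ^ α) x := by
    simpa using ((hasDerivAt_id x).const_sub 1).rpow_const (p := α + 1) (Or.inl hx₁.ne')
  have h₂ : HasDerivAt (fun y : ℝ => (1 + y) ^ (β + 1)) (1 * (β + 1) * (1 + x) ^ β) x := by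
    simpa using ((hasDerivAt_id x).const_add 1).rpow_const (p := β + 1) (Or.inl hx₂.ne')
  refine (((p.hasDerivAt x).mul h₁).mul h₂).congr_deriv ?_
  simp only [jacobiBackwardShift, eval_sub, eval_mul, eval_add, eval_one, eval_pow, eval_X,
    eval_C, Pi.mul_apply, Real.rpow_add_one hx₁.ne', Real.rpow_add_one hx₂.ne']
  ring

theorem intervalIntegrable_mul_rpow_mul_rpow {α β : ℝ} (hα : -1 < α) (hβ : -1 < β) {φ : ℝ → ℝ}
    (hφ : ContinuousOn φ (Icc (-1) 1)) :
    IntervalIntegrable (fun x => φ x * (1 - x) ^ α * (1 + x) ^ β) volume (-1) 1 := by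
  have hleft : IntervalIntegrable (fun x : ℝ => (1 + x) ^ β) volume (-1) 0 := by
    simpa using (intervalIntegral.intervalIntegrable_rpow' hβ (a := 0) (b := 1)).comp_add_left 1
  have hright : IntervalIntegrable (fun x : ℝ => (1 - x) ^ α) volume 0 1 := by
    simpa using (intervalIntegral.intervalIntegrable_rpow' hα (a := 1) (b := 0)).comp_sub_left 1
  have hφ₀ : ContinuousOn φ (uIcc (-1) 0) :=
    hφ.mono (uIcc_subset_Icc (by norm_num) (by norm_num))
  have hφ₁ : ContinuousOn φ (uIcc 0 1) :=
    hφ.mono (uIcc_subset_Icc (by norm_num) (by norm_num))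
  refine IntervalIntegrable.trans (b := 0) (hleft.continuousOn_mul ?_)
    ((hright.continuousOn_mul hφ₁).mul_continuousOn ?_)
  · refine hφ₀.mul ((continuousOn_const.sub continuousOn_id).rpow_const fun x hx => Or.inl ?_)
    rw [uIcc_of_le (by norm_num)] at hx
    show 1 - x ≠ 0
    linarith [hx.2]
  · refine (continuousOn_const.add continuousOn_id).rpow_const fun x hx => Or.inl ?_
    rw [uIcc_of_le (by norm_num)] at hx
    show 1 + x ≠ 0
    linarith [hx.1]

theorem integral_jacobiBackwardShift_mul_rpow_mul_rpow_eq_zero {α β : ℝ} (hα : -1 < α)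
    (hβ : -1 < β) (p : ℝ[X]) :
    ∫ x in (-1 : ℝ)..1, (jacobiBackwardShift α β p).eval x * (1 - x) ^ α * (1 + x) ^ β = 0 := by
  have hcont : ContinuousOn (fun y => p.eval y * (1 - y) ^ (α + 1) * (1 + y) ^ (β + 1))
      (Icc (-1) 1) :=
    ((p.continuous.mul ((continuous_const.sub continuous_id).rpow_const
      fun _ => Or.inr (by linarith))).mul ((continuous_const.add continuous_id).rpow_const
      fun _ => Or.inr (by linarith))).continuousOn
  rw [intervalIntegral.integral_eq_sub_of_hasDerivAt_of_le (by norm_num) hcont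
    (fun x hx => hasDerivAt_eval_mul_rpow_mul_rpow α β p hx)
    (intervalIntegrable_mul_rpow_mul_rpow hα hβ (jacobiBackwardShift α β p).continuousOn)]
  norm_num [Real.zero_rpow (by linarith : α + 1 ≠ 0), Real.zero_rpow (by linarith : β + 1 ≠ 0)]

/-- The operator `jacobiL α β` is skew symmetric with respect to the Jacobi inner product
`⟨f,g⟩ = ∫_{-1}^{1} f(x) g(x) (1-x)^α (1+x)^β dx`. -/
theorem jacobiL_skew_symmetric (α β : ℝ) (hα : -1 < α) (hβ : -1 < β) (f g : ℝ[X]) :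
    (∫ x in (-1:ℝ)..1,
        (jacobiL α β f).eval x * g.eval x * (1 - x) ^ α * (1 + x) ^ β) =
      - ∫ x in (-1:ℝ)..1,
        f.eval x * (jacobiL α β g).eval x * (1 - x) ^ α * (1 + x) ^ β := by
  have h := integral_jacobiBackwardShift_mul_rpow_mul_rpow_eq_zero hα hβ (f * g)
  rw [← jacobiL_mul_add_mul_jacobiL] at h
  simp only [eval_add, eval_mul, add_mul] at h
  rw [intervalIntegral.integral_add
    (intervalIntegrable_mul_rpow_mul_rpow hα hβ (φ := fun x => (jacobiL α β f).eval x * g.eval x)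
      (by fun_prop))
    (intervalIntegrable_mul_rpow_mul_rpow hα hβ (φ := fun x => f.eval x * (jacobiL α β g).eval x)
      (by fun_prop))] at h
  linarith
end

section
/- Let 0 < q < 1 and let a, b, c, d be complex numbers. Let f[z] = Σ_{k=−n}^{n} c_k z^k be a symmetric Laurent polynomial (c_k = c_{−k}) of degree at most n. Then (L f)[z] := [(1−az)(1−bz)(1−cz)(1−dz) z^{−2} f[qz] − (1−a/z)(1−b/z)(1−c/z)(1−d/z) z² f[q^{−1}z]] / (z − z^{−1}) is again a symmetric Laurent polynomial, of degree at most n+1, and its coefficient of z^{n+1} equals (abcd q^n − q^{−n}) c_n. In particular, if c_n ≠ 0 and abcd q^{2n} ≠ 1, then L f has degree exactly n+1. -/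
/-!
Put `G(z) = z⁻² (1 - az)(1 - bz)(1 - cz)(1 - dz) f(qz)`. Since `f` is symmetric,
`f(q⁻¹z) = f(qz⁻¹)`, so the numerator of `L f` is `G(z) - G(z⁻¹)`. As a product of Laurent
polynomials of degrees `2` and `n`, `G` has degree `n + 2`, hence the numerator is an
antisymmetric Laurent polynomial `Σ bⱼ zʲ` of degree `n + 2`. Any such is divisible by `z - z⁻¹`:
the quotient `Σ cₘ zᵐ` with `cₘ = b_{|m|+1} + b_{|m|+3} + ⋯` is symmetric, and
`cₘ₋₁ - cₘ₊₁ = bₘ` telescopes. Its top coefficient is `c_{n+1} = b_{n+2}`, which comes from the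
extreme coefficients `abcd qⁿ cₙ` and `q⁻ⁿ c₋ₙ` of `G`.
-/

/-- The divided q-difference operator `L` of the paper, equation (1.7)/(4.7). -/
noncomputable def awL (q a b c d : ℂ) (f : ℂ → ℂ) (z : ℂ) : ℂ :=
  ((1 - a * z) * (1 - b * z) * (1 - c * z) * (1 - d * z) * z ^ (-2 : ℤ) * f (q * z) -
      (1 - a / z) * (1 - b / z) * (1 - c / z) * (1 - d / z) * z ^ 2 * f (q⁻¹ * z)) /
    (z - z⁻¹)

/-- A symmetric Laurent polynomial `f[z] = Σ_{k=-n}^{n} c_k z^k`. -/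
noncomputable def symLaurent (n : ℕ) (c : ℤ → ℂ) (z : ℂ) : ℂ :=
  ∑ k ∈ Finset.Icc (-(n : ℤ)) (n : ℤ), c k * z ^ k

open Finset

/-- `symLaurent` does not need symmetric coefficients and serves here as the general finite
Laurent sum; `DegreeLE N c` is the support condition under which such sums can be shifted and
multiplied. -/
def DegreeLE {R : Type*} [Zero R] (N : ℕ) (c : ℤ → R) : Prop :=
  ∀ k : ℤ, (N : ℤ) < |k| → c k = 0

section LaurentSums

variable {N : ℕ} {c : ℤ → ℂ} {z : ℂ}

lemma symLaurent_inv (N : ℕ) (c : ℤ → ℂ) (z : ℂ) :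
    symLaurent N c z⁻¹ = symLaurent N (fun k => c (-k)) z := by
  refine sum_nbij' (fun k => -k) (fun k => -k) ?_ ?_ (fun _ _ => neg_neg _)
    (fun _ _ => neg_neg _) (fun k _ => by simp [inv_zpow'])
  all_goals intro k hk; simp only [mem_Icc] at hk ⊢; omega

lemma symLaurent_inv_of_even (hc : c.Even) (z : ℂ) : symLaurent N c z⁻¹ = symLaurent N c z := by
  simp only [symLaurent_inv, hc.eq]

lemma symLaurent_mul_arg (N : ℕ) (c : ℤ → ℂ) (r z : ℂ) :
    symLaurent N c (r * z) = symLaurent N (fun k => r ^ k * c k) z :=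
  sum_congr rfl fun k _ => by rw [mul_zpow]; ring

lemma symLaurent_sub (N : ℕ) (u v : ℤ → ℂ) (z : ℂ) :
    symLaurent N u z - symLaurent N v z = symLaurent N (fun k => u k - v k) z := by
  rw [symLaurent, symLaurent, ← sum_sub_distrib]
  exact sum_congr rfl fun k _ => by ring

noncomputable def truncCoeff (N : ℕ) (c : ℤ → ℂ) (k : ℤ) : ℂ :=
  if |k| ≤ N then c k else 0

lemma truncCoeff_of_abs_le (c : ℤ → ℂ) {k : ℤ} (hk : |k| ≤ N) : truncCoeff N c k = c k :=
  if_pos hk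

lemma degreeLE_truncCoeff (N : ℕ) (c : ℤ → ℂ) : DegreeLE N (truncCoeff N c) := fun _ hk =>
  if_neg hk.not_ge

lemma symLaurent_truncCoeff (N : ℕ) (c : ℤ → ℂ) (z : ℂ) :
    symLaurent N (truncCoeff N c) z = symLaurent N c z :=
  sum_congr rfl fun _ hk => by rw [truncCoeff_of_abs_le c (abs_le.mpr (mem_Icc.mp hk))]

lemma zpow_mul_symLaurent (hc : DegreeLE N c) {K : ℕ} {s : ℤ} (hs : N + |s| ≤ K) (hz : z ≠ 0) :
    z ^ s * symLaurent N c z = symLaurent K (fun k => c (k - s)) z := by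
  have hshift : z ^ s * symLaurent N c z =
      ∑ k ∈ Icc (-(N : ℤ) + s) (N + s), c (k - s) * z ^ k := by
    rw [symLaurent, mul_sum, ← map_add_right_Icc, sum_map]
    refine sum_congr rfl fun j _ => ?_
    simp only [addRightEmbedding_apply, add_sub_cancel_right, zpow_add₀ hz]
    ring
  rw [hshift, symLaurent]
  refine sum_subset (fun k hk => ?_) (fun k _ hk => ?_)
  · simp only [mem_Icc] at hk ⊢
    constructor <;> cases abs_cases s <;> omega
  · simp only [mem_Icc, not_and_or, not_le] at hk
    rw [hc _ (by rw [lt_abs]; omega), zero_mul]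

noncomputable def laurentConv (M : ℕ) (u v : ℤ → ℂ) (k : ℤ) : ℂ :=
  ∑ i ∈ Icc (-(M : ℤ)) M, u i * v (k - i)

lemma symLaurent_mul_symLaurent (M : ℕ) (u : ℤ → ℂ) (hc : DegreeLE N c) (hz : z ≠ 0) :
    symLaurent M u z * symLaurent N c z = symLaurent (M + N) (laurentConv M u c) z := by
  simp only [symLaurent, laurentConv, sum_mul]
  rw [sum_comm]
  refine sum_congr rfl fun i hi => ?_
  have hi : |i| ≤ M := abs_le.mpr (mem_Icc.mp hi)
  rw [mul_assoc, ← symLaurent, zpow_mul_symLaurent hc (K := M + N) (by push_cast; omega) hz,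
    symLaurent, mul_sum]
  exact sum_congr rfl fun k _ => by ring

lemma degreeLE_laurentConv (M : ℕ) (u : ℤ → ℂ) (hc : DegreeLE N c) :
    DegreeLE (M + N) (laurentConv M u c) := fun k hk =>
  sum_eq_zero fun i hi => by
    have hi : |i| ≤ M := abs_le.mpr (mem_Icc.mp hi)
    rw [lt_abs] at hk
    rw [hc _ (by rw [lt_abs]; cases abs_cases i <;> omega), mul_zero]

lemma laurentConv_top (M : ℕ) (u : ℤ → ℂ) (hc : DegreeLE N c) :
    laurentConv M u c (M + N) = u M * c N := by
  rw [laurentConv, sum_eq_single_of_mem (M : ℤ) (by simp) fun i hi hiM => ?_, add_sub_cancel_left]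
  rw [mem_Icc] at hi
  rw [hc _ (by rw [lt_abs]; omega), mul_zero]

lemma laurentConv_bot (M : ℕ) (u : ℤ → ℂ) (hc : DegreeLE N c) :
    laurentConv M u c (-(M + N)) = u (-M) * c (-N) := by
  rw [laurentConv, sum_eq_single_of_mem (-(M : ℤ)) (by simp) fun i hi hiM => ?_]
  · ring_nf
  rw [mem_Icc] at hi
  rw [hc _ (by rw [lt_abs]; omega), mul_zero]

end LaurentSums

section DivisionBySubInv

variable {G : Type*} [AddCommGroup G] {N : ℕ} {b : ℤ → G}

/-- Solves `cₘ₋₁ - cₘ₊₁ = bₘ` downwards from `c_{N+1} = c_{N+2} = 0`; taking `|m|` makes the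
solution even, which is consistent with the equations when `b` is odd. -/
noncomputable def quotCoeff (N : ℕ) (b : ℤ → G) (m : ℤ) : G :=
  ∑ k ∈ range (N + 1), b (|m| + 1 + 2 * k)

lemma quotCoeff_even (N : ℕ) (b : ℤ → G) : (quotCoeff N b).Even := fun m => by
  simp only [quotCoeff, abs_neg]

lemma degreeLE_quotCoeff (hb : DegreeLE (N + 1) b) : DegreeLE N (quotCoeff N b) := fun m hm =>
  sum_eq_zero fun k _ => hb _ (by rw [abs_of_nonneg (by positivity)]; omega)

lemma quotCoeff_top (hb : DegreeLE (N + 1) b) : quotCoeff N b N = b (N + 1) := by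
  rw [quotCoeff, Nat.abs_cast, sum_range_succ', sum_eq_zero fun k _ => hb _ ?_, zero_add]
  · simp
  · rw [abs_of_nonneg (by positivity)]; push_cast; omega

lemma quotCoeff_pred_sub_succ_of_pos (hb : DegreeLE (N + 1) b) {m : ℤ} (hm : 0 < m) :
    quotCoeff N b (m - 1) - quotCoeff N b (m + 1) = b m := by
  have hlast : b (m + 1 + 1 + 2 * N) = 0 := hb _ (by rw [lt_abs]; push_cast; omega)
  rw [quotCoeff, quotCoeff, abs_of_nonneg (show 0 ≤ m - 1 by omega),
    abs_of_pos (show 0 < m + 1 by omega), sum_range_succ', sum_range_succ, hlast]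
  push_cast
  ring_nf
  abel

lemma quotCoeff_pred_sub_succ [IsAddTorsionFree G] (hodd : b.Odd) (hb : DegreeLE (N + 1) b)
    (m : ℤ) : quotCoeff N b (m - 1) - quotCoeff N b (m + 1) = b m := by
  rcases lt_trichotomy m 0 with hm | rfl | hm
  · have h := quotCoeff_pred_sub_succ_of_pos hb (neg_pos.mpr hm)
    rw [hodd] at h
    rw [← quotCoeff_even N b (m - 1), ← quotCoeff_even N b (m + 1), ← neg_neg (b m), ← h,
      show -(m - 1) = -m + 1 by ring, show -(m + 1) = -m - 1 by ring, neg_sub]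
  · rw [hodd.map_zero, zero_sub, zero_add, quotCoeff_even, sub_self]
  · exact quotCoeff_pred_sub_succ_of_pos hb hm

lemma sub_inv_mul_symLaurent {c : ℤ → ℂ} (hc : DegreeLE N c) {z : ℂ} (hz : z ≠ 0) :
    (z - z⁻¹) * symLaurent N c z = symLaurent (N + 1) (fun m => c (m - 1) - c (m + 1)) z := by
  have hup := zpow_mul_symLaurent hc (K := N + 1) (s := 1) (by simp) hz
  have hdown := zpow_mul_symLaurent hc (K := N + 1) (s := -1) (by simp) hz
  rw [zpow_one] at hup
  rw [zpow_neg_one] at hdown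
  rw [sub_mul, hup, hdown, symLaurent_sub]
  simp only [sub_neg_eq_add]

lemma symLaurent_eq_sub_inv_mul_quotCoeff {b : ℤ → ℂ} (hodd : b.Odd) (hb : DegreeLE (N + 1) b)
    {z : ℂ} (hz : z ≠ 0) : symLaurent (N + 1) b z = (z - z⁻¹) * symLaurent N (quotCoeff N b) z := by
  rw [sub_inv_mul_symLaurent (degreeLE_quotCoeff hb) hz]
  simp only [quotCoeff_pred_sub_succ hodd hb]

lemma sub_inv_ne_zero {z : ℂ} (hz : z ≠ 0) (hz2 : z ^ 2 ≠ 1) : z - z⁻¹ ≠ 0 := by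
  rw [sub_ne_zero]
  intro h
  apply hz2
  rw [sq]
  nth_rewrite 2 [h]
  exact mul_inv_cancel₀ hz

end DivisionBySubInv

section AskeyWilson

variable {q a b c d : ℂ} {n : ℕ} {cf : ℤ → ℂ} {z : ℂ}

noncomputable def awCoeff (a b c d : ℂ) (k : ℤ) : ℂ :=
  if k = -2 then 1
  else if k = -1 then -(a + b + c + d)
  else if k = 0 then a * b + a * c + a * d + b * c + b * d + c * d
  else if k = 1 then -(a * b * c + a * b * d + a * c * d + b * c * d)
  else if k = 2 then a * b * c * d
  else 0

lemma awCoeff_two : awCoeff a b c d 2 = a * b * c * d := by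
  simp [awCoeff]

lemma awCoeff_neg_two : awCoeff a b c d (-2) = 1 :=
  if_pos rfl

lemma awFactor_eq_symLaurent (hz : z ≠ 0) :
    (1 - a * z) * (1 - b * z) * (1 - c * z) * (1 - d * z) * z ^ (-2 : ℤ) =
      symLaurent 2 (awCoeff a b c d) z := by
  rw [symLaurent, show Icc (-((2 : ℕ) : ℤ)) (2 : ℕ) = {-2, -1, 0, 1, 2} by decide]
  simp +decide only [sum_insert, mem_insert, mem_singleton, sum_singleton, awCoeff, if_true,
    if_false, zpow_neg, zpow_ofNat]
  field_simp
  ring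

noncomputable def awTerm (q a b c d : ℂ) (f : ℂ → ℂ) (z : ℂ) : ℂ :=
  (1 - a * z) * (1 - b * z) * (1 - c * z) * (1 - d * z) * z ^ (-2 : ℤ) * f (q * z)

lemma awL_eq_awTerm_sub {f : ℂ → ℂ} (hf : ∀ w, f w⁻¹ = f w) (z : ℂ) :
    awL q a b c d f z = (awTerm q a b c d f z - awTerm q a b c d f z⁻¹) / (z - z⁻¹) := by
  have hpow : z⁻¹ ^ (-2 : ℤ) = z ^ 2 := by rw [inv_zpow', neg_neg, zpow_ofNat]
  rw [awL, awTerm, awTerm, ← hf (q * z⁻¹), mul_inv, inv_inv, hpow]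
  simp only [div_eq_mul_inv]

noncomputable def awTermCoeff (q a b c d : ℂ) (n : ℕ) (cf : ℤ → ℂ) : ℤ → ℂ :=
  laurentConv 2 (awCoeff a b c d) fun k => q ^ k * truncCoeff n cf k

lemma degreeLE_scaled_truncCoeff (q : ℂ) (n : ℕ) (cf : ℤ → ℂ) :
    DegreeLE n fun k => q ^ k * truncCoeff n cf k := fun k hk => by
  simp only [degreeLE_truncCoeff n cf k hk, mul_zero]

lemma degreeLE_awTermCoeff : DegreeLE (n + 2) (awTermCoeff q a b c d n cf) := by
  rw [add_comm]
  exact degreeLE_laurentConv 2 _ (degreeLE_scaled_truncCoeff q n cf)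

lemma awTerm_symLaurent (hz : z ≠ 0) :
    awTerm q a b c d (symLaurent n cf) z = symLaurent (2 + n) (awTermCoeff q a b c d n cf) z := by
  rw [awTerm, awFactor_eq_symLaurent hz, ← symLaurent_truncCoeff n cf, symLaurent_mul_arg,
    symLaurent_mul_symLaurent 2 _ (degreeLE_scaled_truncCoeff q n cf) hz, awTermCoeff]

noncomputable def awLCoeff (q a b c d : ℂ) (n : ℕ) (cf : ℤ → ℂ) : ℤ → ℂ :=
  quotCoeff (n + 1) fun k => awTermCoeff q a b c d n cf k - awTermCoeff q a b c d n cf (-k)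

lemma degreeLE_awTermCoeff_sub_neg :
    DegreeLE (n + 2) fun k => awTermCoeff q a b c d n cf k - awTermCoeff q a b c d n cf (-k) :=
  fun k hk => by
    dsimp only
    rw [degreeLE_awTermCoeff k hk, degreeLE_awTermCoeff (-k) (by rwa [abs_neg]), sub_zero]

lemma awL_symLaurent (hcf : cf.Even) (hz : z ≠ 0) (hz2 : z ^ 2 ≠ 1) :
    awL q a b c d (symLaurent n cf) z = symLaurent (n + 1) (awLCoeff q a b c d n cf) z := by
  have hodd : Function.Odd fun k => awTermCoeff q a b c d n cf k - awTermCoeff q a b c d n cf (-k) :=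
    fun k => by simp only [neg_neg, neg_sub]
  rw [awL_eq_awTerm_sub (symLaurent_inv_of_even hcf), awTerm_symLaurent hz,
    awTerm_symLaurent (inv_ne_zero hz), symLaurent_inv, symLaurent_sub, add_comm,
    symLaurent_eq_sub_inv_mul_quotCoeff hodd degreeLE_awTermCoeff_sub_neg hz,
    mul_div_cancel_left₀ _ (sub_inv_ne_zero hz hz2), awLCoeff]

lemma awLCoeff_top (hcf : cf.Even) :
    awLCoeff q a b c d n cf (n + 1) = (a * b * c * d * q ^ n - q ^ (-(n : ℤ))) * cf n := by
  have htop := laurentConv_top 2 (awCoeff a b c d) (degreeLE_scaled_truncCoeff q n cf)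
  have hbot := laurentConv_bot 2 (awCoeff a b c d) (degreeLE_scaled_truncCoeff q n cf)
  push_cast at htop hbot
  rw [awLCoeff, ← Nat.cast_add_one, quotCoeff_top degreeLE_awTermCoeff_sub_neg,
    show ((n + 1 : ℕ) : ℤ) + 1 = 2 + n by push_cast; ring, awTermCoeff, htop, hbot, awCoeff_two,
    awCoeff_neg_two, truncCoeff_of_abs_le cf (k := n) (by simp),
    truncCoeff_of_abs_le cf (k := -n) (by simp), hcf.eq, zpow_natCast]
  ring

end AskeyWilson

lemma mul_pow_sub_zpow_neg_ne_zero {q e : ℂ} (hq : q ≠ 0) {n : ℕ} (he : e * q ^ (2 * n) ≠ 1) :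
    e * q ^ n - q ^ (-(n : ℤ)) ≠ 0 := by
  have hfactor : e * q ^ (2 * n) - 1 = (e * q ^ n - q ^ (-(n : ℤ))) * q ^ n := by
    rw [sub_mul, zpow_neg, zpow_natCast, inv_mul_cancel₀ (pow_ne_zero n hq)]
    ring
  intro h
  rw [h, zero_mul, sub_eq_zero] at hfactor
  exact he hfactor

theorem awL_degree_raising_general (q : ℝ) (hq0 : 0 < q) (a b c d : ℂ)
    (n : ℕ) (cf : ℤ → ℂ) (hcf : ∀ k, cf k = cf (-k)) :
    ∃ c' : ℤ → ℂ, (∀ k, c' k = c' (-k)) ∧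
      (∀ z : ℂ, z ≠ 0 → z ^ 2 ≠ 1 →
        awL (q : ℂ) a b c d (symLaurent n cf) z = symLaurent (n + 1) c' z) ∧
      c' (n + 1) = (a * b * c * d * (q : ℂ) ^ (n : ℕ) - (q : ℂ) ^ (-(n : ℤ))) * cf n ∧
      (cf n ≠ 0 → a * b * c * d * (q : ℂ) ^ (2 * n) ≠ 1 → c' (n + 1) ≠ 0) := by
  have hcf_even : cf.Even := fun k => (hcf k).symm
  have hq : (q : ℂ) ≠ 0 := Complex.ofReal_ne_zero.mpr hq0.ne'
  refine ⟨awLCoeff q a b c d n cf, fun k => (quotCoeff_even _ _ k).symm,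
    fun z hz hz2 => awL_symLaurent hcf_even hz hz2, awLCoeff_top hcf_even, fun hcn habcd => ?_⟩
  rw [awLCoeff_top hcf_even]
  exact mul_ne_zero (mul_pow_sub_zpow_neg_ne_zero hq habcd) hcn

/-- **The operator `L` raises the degree of symmetric Laurent polynomials by one**: if `f` is a
symmetric Laurent polynomial of degree at most `n`, then `L f` is a symmetric Laurent
polynomial of degree at most `n+1` whose coefficient of `z^{n+1}` is `(abcd qⁿ - q⁻ⁿ) cₙ`;
in particular `L f` has degree exactly `n+1` when `cₙ ≠ 0` and `abcd q^{2n} ≠ 1`. -/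
theorem awL_degree_raising (q : ℝ) (hq0 : 0 < q) (hq1 : q < 1) (a b c d : ℂ)
    (n : ℕ) (cf : ℤ → ℂ) (hcf : ∀ k, cf k = cf (-k)) :
    ∃ c' : ℤ → ℂ, (∀ k, c' k = c' (-k)) ∧
      (∀ z : ℂ, z ≠ 0 → z ^ 2 ≠ 1 →
        awL (q : ℂ) a b c d (symLaurent n cf) z = symLaurent (n + 1) c' z) ∧
      c' (n + 1) = (a * b * c * d * (q : ℂ) ^ (n : ℕ) - (q : ℂ) ^ (-(n : ℤ))) * cf n ∧
      (cf n ≠ 0 → a * b * c * d * (q : ℂ) ^ (2 * n) ≠ 1 → c' (n + 1) ≠ 0) :=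
  awL_degree_raising_general q hq0 a b c d n cf hcf
end

section
/- Let 0 < q < 1 and let t be a real number with |t| < 1. Then for every n ≥ 1, identically in z ≠ 0: z^{−1}(1−t z²) C_n[q^{1/2} z] + z(1−t z^{−2}) C_n[q^{−1/2} z] = q^{−n/2}(1−q^{n+1}) C_{n+1}[z] − q^{−n/2}(1−t² q^{n−1}) C_{n−1}[z]. -/
/-- The q-Pochhammer symbol `(x;q)_k = ∏_{j=0}^{k-1} (1 - x qʲ)`. -/
noncomputable def qPoch (x q : ℂ) (k : ℕ) : ℂ := ∏ j ∈ Finset.range k, (1 - x * q ^ j)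

/-- The continuous q-ultraspherical polynomial
`Cₙ[z] = Σ_{k=0}^{n} (t;q)_k (t;q)_{n-k} / ((q;q)_k (q;q)_{n-k}) z^{n-2k}`. -/
noncomputable def cqUltra (q t : ℝ) (n : ℕ) (z : ℂ) : ℂ :=
  ∑ k ∈ Finset.range (n + 1),
    qPoch (t : ℂ) (q : ℂ) k * qPoch (t : ℂ) (q : ℂ) (n - k) /
        (qPoch (q : ℂ) (q : ℂ) k * qPoch (q : ℂ) (q : ℂ) (n - k)) *
      z ^ ((n : ℤ) - 2 * (k : ℤ))

/-!
Write `Cₙ[z] = zⁿ Σₖ aₙₖ wᵏ` with `w = z⁻²`. After multiplication by `q^{n/2}` both sides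
become `z^{n+1}` times polynomials in `w`, and comparing coefficients of `w^{k+1}` leaves a
three-term identity between the `aₙₖ`. Once the last factors of the Pochhammer symbols of
length `k + 1` and `n - k + 1` are split off, it is a rational identity in `t`, `qᵏ` and
`q^{n-k}`; the extreme coefficients obey a two-term version of it.
-/

open Finset

lemma qPoch_zero (x q : ℂ) : qPoch x q 0 = 1 := prod_range_zero _

lemma qPoch_succ (x q : ℂ) (k : ℕ) : qPoch x q (k + 1) = qPoch x q k * (1 - x * q ^ k) :=
  prod_range_succ _ _

lemma qPoch_ne_zero {x q : ℂ} (hx : ‖x‖ < 1) (hq : ‖q‖ ≤ 1) (k : ℕ) : qPoch x q k ≠ 0 := by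
  refine prod_ne_zero_iff.2 fun j _ => sub_ne_zero.2 fun h => ?_
  have : ‖x * q ^ j‖ < 1 := by
    rw [norm_mul, norm_pow]
    exact (mul_le_of_le_one_right (norm_nonneg x) (pow_le_one₀ (norm_nonneg q) hq)).trans_lt hx
  simp [← h] at this

lemma sum_range_mul_pow_succ_add_mul_pow {R : Type*} [CommSemiring R] (u v : ℕ → R) (w : R)
    (n : ℕ) :
    ∑ k ∈ range (n + 1), (u k * w ^ (k + 1) + v k * w ^ k)
      = v 0 + ∑ k ∈ range n, (u k + v (k + 1)) * w ^ (k + 1) + u n * w ^ (n + 1) := by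
  rw [sum_add_distrib, sum_range_succ, sum_range_succ' (fun k => v k * w ^ k)]
  simp only [add_mul, sum_add_distrib, pow_zero, mul_one]
  ring

noncomputable def cqCoeff (q t : ℂ) (n k : ℕ) : ℂ :=
  qPoch t q k * qPoch t q (n - k) / (qPoch q q k * qPoch q q (n - k))

lemma cqUltra_eq_sum_cqCoeff (q t : ℝ) (n : ℕ) (z : ℂ) :
    cqUltra q t n z = ∑ k ∈ range (n + 1), cqCoeff q t n k * z ^ ((n : ℤ) - 2 * (k : ℤ)) :=
  rfl

section Coefficients

variable {q : ℂ} (t : ℂ)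

lemma cqCoeff_self (n : ℕ) : cqCoeff q t n n = cqCoeff q t n 0 := by
  simp only [cqCoeff, Nat.sub_self, Nat.sub_zero, mul_comm]

lemma cqCoeff_succ_zero (hq : ∀ k, qPoch q q k ≠ 0) (n : ℕ) :
    (1 - q ^ (n + 1)) * cqCoeff q t (n + 1) 0 = (1 - t * q ^ n) * cqCoeff q t n 0 := by
  obtain ⟨hn, hn1⟩ := mul_ne_zero_iff.1 (qPoch_succ q q n ▸ hq (n + 1))
  simp only [cqCoeff, Nat.sub_zero, qPoch_zero, one_mul, qPoch_succ, ← pow_succ'] at hn1 ⊢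
  field_simp

lemma cqCoeff_succ_self (hq : ∀ k, qPoch q q k ≠ 0) (n : ℕ) :
    (1 - q ^ (n + 1)) * cqCoeff q t (n + 1) (n + 1) = (1 - t * q ^ n) * cqCoeff q t n n := by
  rw [cqCoeff_self, cqCoeff_self, cqCoeff_succ_zero t hq]

lemma cqCoeff_structure_relation (hq : ∀ k, qPoch q q k ≠ 0) {n k : ℕ} (hk : k ≤ n) :
    cqCoeff q t (n + 1) k * (q ^ (n + 1 - k) - t * q ^ k)
        + cqCoeff q t (n + 1) (k + 1) * (q ^ (k + 1) - t * q ^ (n - k))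
      = (1 - q ^ (n + 2)) * cqCoeff q t (n + 2) (k + 1)
        - (1 - t ^ 2 * q ^ n) * cqCoeff q t n k := by
  obtain ⟨m, rfl⟩ := Nat.exists_eq_add_of_le hk
  obtain ⟨hk0, hk1⟩ := mul_ne_zero_iff.1 (qPoch_succ q q k ▸ hq (k + 1))
  obtain ⟨hm0, hm1⟩ := mul_ne_zero_iff.1 (qPoch_succ q q m ▸ hq (m + 1))
  simp only [cqCoeff, show k + m + 1 - k = m + 1 by omega, show k + m + 1 - (k + 1) = m by omega,
    show k + m + 2 - (k + 1) = m + 1 by omega, show k + m - k = m by omega, qPoch_succ,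
    ← pow_succ'] at hk1 hm1 ⊢
  field_simp
  ring

lemma cqCoeff_sum_structure_relation (hq : ∀ k, qPoch q q k ≠ 0) (n : ℕ) (w : ℂ) :
    (w - t) * ∑ k ∈ range (n + 2), cqCoeff q t (n + 1) k * q ^ (n + 1 - k) * w ^ k
        + (1 - t * w) * ∑ k ∈ range (n + 2), cqCoeff q t (n + 1) k * q ^ k * w ^ k
      = (1 - q ^ (n + 2)) * ∑ k ∈ range (n + 3), cqCoeff q t (n + 2) k * w ^ k
        - (1 - t ^ 2 * q ^ n) * w * ∑ k ∈ range (n + 1), cqCoeff q t n k * w ^ k := by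
  have hlhs : (w - t) * ∑ k ∈ range (n + 2), cqCoeff q t (n + 1) k * q ^ (n + 1 - k) * w ^ k
        + (1 - t * w) * ∑ k ∈ range (n + 2), cqCoeff q t (n + 1) k * q ^ k * w ^ k
      = ∑ k ∈ range (n + 2),
          (cqCoeff q t (n + 1) k * (q ^ (n + 1 - k) - t * q ^ k) * w ^ (k + 1)
            + cqCoeff q t (n + 1) k * (q ^ k - t * q ^ (n + 1 - k)) * w ^ k) := by
    rw [mul_sum, mul_sum, ← sum_add_distrib]
    exact sum_congr rfl fun k _ => by ring
  have hmid : ∀ k ∈ range (n + 1),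
      (cqCoeff q t (n + 1) k * (q ^ (n + 1 - k) - t * q ^ k)
          + cqCoeff q t (n + 1) (k + 1) * (q ^ (k + 1) - t * q ^ (n + 1 - (k + 1))))
          * w ^ (k + 1)
        = (1 - q ^ (n + 2)) * (cqCoeff q t (n + 2) (k + 1) * w ^ (k + 1))
          - (1 - t ^ 2 * q ^ n) * w * (cqCoeff q t n k * w ^ k) := fun k hk => by
    rw [Nat.add_sub_add_right,
      cqCoeff_structure_relation t hq (Nat.lt_succ_iff.1 (mem_range.1 hk))]
    ring
  have hrhs : ∑ k ∈ range (n + 3), cqCoeff q t (n + 2) k * w ^ k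
      = cqCoeff q t (n + 2) 0 + ∑ k ∈ range (n + 1), cqCoeff q t (n + 2) (k + 1) * w ^ (k + 1)
        + cqCoeff q t (n + 2) (n + 2) * w ^ (n + 2) := by
    rw [sum_range_succ', sum_range_succ, pow_zero, mul_one]
    ring
  rw [hlhs, sum_range_mul_pow_succ_add_mul_pow, sum_congr rfl hmid, sum_sub_distrib, ← mul_sum,
    ← mul_sum, hrhs]
  simp only [Nat.sub_zero, Nat.sub_self, pow_zero]
  linear_combination
    -cqCoeff_succ_zero t hq (n + 1) - w ^ (n + 2) * cqCoeff_succ_self t hq (n + 1)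

end Coefficients

lemma cqUltra_eq_pow_mul_sum (q t : ℝ) (n : ℕ) {z : ℂ} (hz : z ≠ 0) :
    cqUltra q t n z = z ^ n * ∑ k ∈ range (n + 1), cqCoeff q t n k * (z ^ 2)⁻¹ ^ k := by
  rw [cqUltra_eq_sum_cqCoeff, mul_sum]
  refine sum_congr rfl fun k _ => ?_
  rw [show (n : ℤ) - 2 * k = n - (2 * k : ℕ) by push_cast; ring, zpow_sub₀ hz, zpow_natCast,
    zpow_natCast, pow_mul, div_eq_mul_inv, inv_pow]
  ring

lemma pow_mul_cqUltra_mul (q t : ℝ) (n : ℕ) {c z : ℂ} (hc : c ≠ 0) (hz : z ≠ 0) :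
    c ^ n * cqUltra q t n (c * z)
      = z ^ n * ∑ k ∈ range (n + 1), cqCoeff q t n k * (c ^ 2) ^ (n - k) * (z ^ 2)⁻¹ ^ k := by
  rw [cqUltra_eq_pow_mul_sum q t n (mul_ne_zero hc hz), mul_sum, mul_sum, mul_sum]
  refine sum_congr rfl fun k hk => ?_
  rw [pow_sub₀ _ (pow_ne_zero 2 hc) (Nat.lt_succ_iff.1 (mem_range.1 hk))]
  ring

lemma pow_mul_cqUltra_inv_mul (q t : ℝ) (n : ℕ) {c z : ℂ} (hc : c ≠ 0) (hz : z ≠ 0) :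
    c ^ n * cqUltra q t n (c⁻¹ * z)
      = z ^ n * ∑ k ∈ range (n + 1), cqCoeff q t n k * (c ^ 2) ^ k * (z ^ 2)⁻¹ ^ k := by
  rw [cqUltra_eq_pow_mul_sum q t n (mul_ne_zero (inv_ne_zero hc) hz),
    mul_sum, mul_sum, mul_sum]
  refine sum_congr rfl fun k _ => ?_
  have hcn : c ^ n * c⁻¹ ^ n = 1 := by rw [← mul_pow, mul_inv_cancel₀ hc, one_pow]
  rw [mul_pow c⁻¹ z 2, mul_inv, inv_pow, inv_inv]
  linear_combination (z ^ n * cqCoeff q t n k * (c ^ 2) ^ k * (z ^ 2)⁻¹ ^ k) * hcn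

lemma Real.rpow_neg_natCast_div_two {q : ℝ} (hq : 0 ≤ q) (n : ℕ) :
    q ^ (-(n : ℝ) / 2) = (√q ^ n)⁻¹ := by
  rw [Real.sqrt_eq_rpow, ← Real.rpow_natCast, ← Real.rpow_mul hq, ← Real.rpow_neg hq]
  ring_nf

theorem cq_ultraspherical_structure_relation'_general (q t : ℝ) (hq0 : 0 < q) (hq1 : q < 1)
    (n : ℕ) (hn : 1 ≤ n) :
    ∀ z : ℂ, z ≠ 0 →
      z⁻¹ * (1 - (t : ℂ) * z ^ 2) * cqUltra q t n (((q ^ ((1 : ℝ) / 2) : ℝ) : ℂ) * z) +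
          z * (1 - (t : ℂ) * z ^ (-2 : ℤ)) *
            cqUltra q t n (((q ^ (-(1 : ℝ) / 2) : ℝ) : ℂ) * z) =
        (((q ^ (-(n : ℝ) / 2) * (1 - q ^ ((n : ℝ) + 1)) : ℝ) : ℂ)) * cqUltra q t (n + 1) z -
          (((q ^ (-(n : ℝ) / 2) * (1 - t ^ 2 * q ^ ((n : ℝ) - 1)) : ℝ) : ℂ)) *
            cqUltra q t (n - 1) z := by
  intro z hz
  obtain ⟨n, rfl⟩ := Nat.exists_eq_add_of_le' hn
  have hq : ∀ k, qPoch (q : ℂ) q k ≠ 0 :=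
    qPoch_ne_zero (by simpa [abs_of_pos hq0]) (by simp [abs_of_pos hq0, hq1.le])
  have hc : (√q : ℂ) ≠ 0 := by exact_mod_cast (Real.sqrt_pos.2 hq0).ne'
  have hc2 : (√q : ℂ) ^ 2 = q := by exact_mod_cast Real.sq_sqrt hq0.le
  rw [← Real.sqrt_eq_rpow,
    show q ^ (-(1 : ℝ) / 2) = (√q)⁻¹ by simpa using Real.rpow_neg_natCast_div_two hq0.le 1,
    Real.rpow_neg_natCast_div_two hq0.le,
    show ((n + 1 : ℕ) : ℝ) + 1 = (n + 2 : ℕ) by push_cast; ring,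
    show ((n + 1 : ℕ) : ℝ) - 1 = n by push_cast; ring, Real.rpow_natCast, Real.rpow_natCast]
  push_cast
  have hzinv : z⁻¹ * (1 - t * z ^ 2) = z * ((z ^ 2)⁻¹ - t) := by field_simp
  have hzn : z ^ n = z ^ (n + 2) * (z ^ 2)⁻¹ := by
    rw [pow_add, mul_inv_cancel_right₀ (pow_ne_zero 2 hz)]
  rw [hzinv, zpow_neg, zpow_ofNat,
    (eq_inv_mul_iff_mul_eq₀ (pow_ne_zero _ hc)).2 (pow_mul_cqUltra_mul q t (n + 1) hc hz),
    (eq_inv_mul_iff_mul_eq₀ (pow_ne_zero _ hc)).2 (pow_mul_cqUltra_inv_mul q t (n + 1) hc hz),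
    hc2, cqUltra_eq_pow_mul_sum q t (n + 1 + 1) hz, cqUltra_eq_pow_mul_sum q t n hz, hzn]
  linear_combination
    (↑√q ^ (n + 1))⁻¹ * z ^ (n + 2) * cqCoeff_sum_structure_relation (t : ℂ) hq n (z ^ 2)⁻¹

/-- **A structure relation with a non-skew-symmetric operator for continuous
q-ultraspherical polynomials**, equation (6.6) of the paper. -/
theorem cq_ultraspherical_structure_relation' (q t : ℝ) (hq0 : 0 < q) (hq1 : q < 1)
    (ht : |t| < 1) (n : ℕ) (hn : 1 ≤ n) :
    ∀ z : ℂ, z ≠ 0 →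
      z⁻¹ * (1 - (t : ℂ) * z ^ 2) * cqUltra q t n (((q ^ ((1 : ℝ) / 2) : ℝ) : ℂ) * z) +
          z * (1 - (t : ℂ) * z ^ (-2 : ℤ)) *
            cqUltra q t n (((q ^ (-(1 : ℝ) / 2) : ℝ) : ℂ) * z) =
        (((q ^ (-(n : ℝ) / 2) * (1 - q ^ ((n : ℝ) + 1)) : ℝ) : ℂ)) * cqUltra q t (n + 1) z -
          (((q ^ (-(n : ℝ) / 2) * (1 - t ^ 2 * q ^ ((n : ℝ) - 1)) : ℝ) : ℂ)) *
            cqUltra q t (n - 1) z :=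
  cq_ultraspherical_structure_relation'_general q t hq0 hq1 n hn
end
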